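/- arXiv:1907.08766 — 6 statements merged into one kernel-verified Lean document; each statement's English description precedes it below -/
import Mathlib

section
/- Let 0 < λ ≤ 1. If ε and Z are independent random variables on a probability space, ε is standard Gumbel distributed, and Z is nonnegative and positive stable with parameter λ (note Z > 0 almost surely), then ε + log Z has cumulative distribution function x ↦ exp(−exp(−λx)), i.e. ε + log Z is Gumbel distributed with location 0 and scale 1/λ. -/
open MeasureTheory ProbabilityTheory Real

noncomputable section

/-- A nonnegative random variable `Z` is *positive stable* with parameter `l` (w.r.t. the
probability measure `μ`) if its Laplace transform is `t ↦ exp (-t ^ l)`. -/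
def IsPosStable {Ω : Type*} [MeasurableSpace Ω] (μ : Measure Ω) (Z : Ω → ℝ) (l : ℝ) : Prop :=
  Measurable Z ∧ (∀ ω, 0 ≤ Z ω) ∧
    ∀ t : ℝ, 0 ≤ t → ∫ ω, Real.exp (-t * Z ω) ∂μ = Real.exp (-t ^ l)

/-- A random variable `ε` is *standard Gumbel* distributed if its cdf is `x ↦ exp (-exp (-x))`. -/
def IsStdGumbel {Ω : Type*} [MeasurableSpace Ω] (μ : Measure Ω) (ε : Ω → ℝ) : Prop :=
  Measurable ε ∧ ∀ x : ℝ, μ {ω | ε ω ≤ x} = ENNReal.ofReal (Real.exp (-Real.exp (-x)))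

/-- Main theorem: if `ε ~ G(0,1)` and `Z ~ P(l)` are independent, then `ε + log Z ~ G(0, 1/l)`,
i.e. its cdf is `x ↦ exp (-exp (-l * x))`. -/
theorem stmt_2 {Ω : Type*} [MeasurableSpace Ω] (μ : Measure Ω) [IsProbabilityMeasure μ]
    (l : ℝ) (hl0 : 0 < l) (hl1 : l ≤ 1)
    (ε Z : Ω → ℝ) (hε : IsStdGumbel μ ε) (hZ : IsPosStable μ Z l)
    (hindep : IndepFun ε Z μ) :
    ∀ x : ℝ, μ {ω | ε ω + Real.log (Z ω) ≤ x}
      = ENNReal.ofReal (Real.exp (-Real.exp (-(l * x)))) := by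
  obtain ⟨hεm, hεcdf⟩ := hε
  obtain ⟨hZm, hZ0, hZlap⟩ := hZ
  -- integrability of the Laplace integrand
  have hint : ∀ t : ℝ, 0 ≤ t → Integrable (fun ω => Real.exp (-t * Z ω)) μ := by
    intro t ht
    refine (integrable_const (1 : ℝ)).mono ?_ ?_
    · exact (Real.measurable_exp.comp (measurable_const.mul hZm)).aestronglyMeasurable
    · filter_upwards with ω
      rw [norm_one, Real.norm_eq_abs, abs_of_pos (Real.exp_pos _)]
      exact Real.exp_le_one_iff.2 (by nlinarith [hZ0 ω])
  have hnn : ∀ t : ℝ, (0 : Ω → ℝ) ≤ᵐ[μ] fun ω => Real.exp (-t * Z ω) := by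
    intro t
    filter_upwards with ω
    exact (Real.exp_pos _).le
  -- Z is almost surely nonzero
  have hZzero : μ {ω | Z ω = 0} = 0 := by
    have hmeas : MeasurableSet {ω | Z ω = 0} := hZm (measurableSet_singleton 0)
    have key : ∀ t : ℝ, 0 ≤ t → (μ {ω | Z ω = 0}).toReal ≤ Real.exp (-t ^ l) := by
      intro t ht
      have h1 : ∫ ω in {ω | Z ω = 0}, Real.exp (-t * Z ω) ∂μ
          = (μ {ω | Z ω = 0}).toReal := by
        rw [setIntegral_congr_fun hmeas (g := fun _ => (1 : ℝ))
          (fun ω hω => by simp [Set.mem_setOf_eq.mp hω]), setIntegral_const, smul_eq_mul, mul_one, measureReal_def]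
      calc (μ {ω | Z ω = 0}).toReal = ∫ ω in {ω | Z ω = 0}, Real.exp (-t * Z ω) ∂μ := h1.symm
        _ ≤ ∫ ω, Real.exp (-t * Z ω) ∂μ := setIntegral_le_integral (hint t ht) (hnn t)
        _ = Real.exp (-t ^ l) := hZlap t ht
    have h0 : (μ {ω | Z ω = 0}).toReal ≤ 0 := by
      apply le_of_forall_pos_le_add
      intro δ hδ
      have ht0 : (0 : ℝ) ≤ ((-Real.log δ) ⊔ 0) ^ l⁻¹ :=
        Real.rpow_nonneg (le_max_right _ _) _
      have hp : ((((-Real.log δ) ⊔ 0) ^ l⁻¹) ^ l) = (-Real.log δ) ⊔ 0 :=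
        Real.rpow_inv_rpow (le_max_right _ _) (ne_of_gt hl0)
      have h2 := key _ ht0
      rw [hp] at h2
      have h3 : Real.exp (-((-Real.log δ) ⊔ 0)) ≤ δ := by
        calc Real.exp (-((-Real.log δ) ⊔ 0)) ≤ Real.exp (Real.log δ) :=
              Real.exp_le_exp.2 (by simp [neg_le, le_max_left])
          _ = δ := Real.exp_log hδ
      linarith
    have hne : μ {ω | Z ω = 0} ≠ ⊤ := measure_ne_top μ _
    exact ((ENNReal.toReal_eq_zero_iff _).1
      (le_antisymm h0 ENNReal.toReal_nonneg)).resolve_right hne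
  have hZle : μ {ω | Z ω ≤ 0} = 0 := by
    refine measure_mono_null (fun ω h => ?_) hZzero
    exact le_antisymm h (hZ0 ω)
  intro x
  -- joint law is product of marginals
  have hmapeq : μ.map (fun ω => (Z ω, ε ω)) = (μ.map Z).prod (μ.map ε) :=
    (indepFun_iff_map_prod_eq_prod_map_map hZm.aemeasurable hεm.aemeasurable).1 hindep.symm
  have hSmeas : MeasurableSet {p : ℝ × ℝ | p.2 + Real.log p.1 ≤ x} :=
    measurableSet_le (measurable_snd.add (Real.measurable_log.comp measurable_fst))
      measurable_const
  have h1 : μ {ω | ε ω + Real.log (Z ω) ≤ x}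
      = ((μ.map Z).prod (μ.map ε)) {p : ℝ × ℝ | p.2 + Real.log p.1 ≤ x} := by
    rw [← hmapeq, Measure.map_apply (hZm.prodMk hεm) hSmeas]
    rfl
  rw [h1, Measure.prod_apply hSmeas]
  have hinner : ∀ z : ℝ,
      (μ.map ε) (Prod.mk z ⁻¹' {p : ℝ × ℝ | p.2 + Real.log p.1 ≤ x})
        = ENNReal.ofReal (Real.exp (-Real.exp (-(x - Real.log z)))) := by
    intro z
    have hset : (Prod.mk z ⁻¹' {p : ℝ × ℝ | p.2 + Real.log p.1 ≤ x})
        = Set.Iic (x - Real.log z) := by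
      ext e
      simp [Set.mem_Iic, le_sub_iff_add_le]
    rw [hset, Measure.map_apply hεm measurableSet_Iic]
    exact hεcdf (x - Real.log z)
  simp only [hinner]
  -- a.e. positivity of z under the law of Z
  have haepos : ∀ᵐ z ∂(μ.map Z), 0 < z := by
    rw [ae_map_iff hZm.aemeasurable (measurableSet_Ioi (a := (0:ℝ)))]
    rw [ae_iff]
    convert hZle using 2
    ext ω
    simp [Set.mem_Ioi, not_lt]
  have hcongr : ∫⁻ z, ENNReal.ofReal (Real.exp (-Real.exp (-(x - Real.log z)))) ∂(μ.map Z)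
      = ∫⁻ z, ENNReal.ofReal (Real.exp (-Real.exp (-x) * z)) ∂(μ.map Z) := by
    refine lintegral_congr_ae ?_
    filter_upwards [haepos] with z hz
    congr 1
    rw [neg_sub, Real.exp_sub, Real.exp_log hz, div_eq_mul_inv, ← Real.exp_neg]
    ring
  rw [hcongr]
  have hmg : Measurable fun z : ℝ => ENNReal.ofReal (Real.exp (-Real.exp (-x) * z)) :=
    (Real.measurable_exp.comp (measurable_const.mul measurable_id)).ennreal_ofReal
  rw [lintegral_map hmg hZm,
    ← ofReal_integral_eq_lintegral_ofReal (hint (Real.exp (-x)) (Real.exp_pos _).le)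
      (hnn (Real.exp (-x))),
    hZlap _ (Real.exp_pos _).le]
  congr 2
  rw [← Real.exp_mul]
  ring_nf
end
end

section
/- Let λ₁, λ₂ ∈ (0,1). If ε₁, Z₁, Z₂ are mutually independent random variables with ε₁ standard Gumbel distributed, Z₁ nonnegative and positive stable with parameter λ₁, and Z₂ nonnegative and positive stable with parameter λ₂, then the random variable λ₂λ₁ε₁ + λ₂λ₁·log Z₁ + λ₂·log Z₂ is standard Gumbel distributed. -/
open MeasureTheory ProbabilityTheory Real

noncomputable section

lemma intExp {Ω : Type*} [MeasurableSpace Ω] (μ : Measure Ω) [IsProbabilityMeasure μ]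
    (Z : Ω → ℝ) (hZm : Measurable Z) (hZ0 : ∀ ω, 0 ≤ Z ω) (t : ℝ) (ht : 0 ≤ t) :
    Integrable (fun ω => Real.exp (-t * Z ω)) μ := by
  apply Integrable.mono' (integrable_const (1 : ℝ))
    ((hZm.const_mul (-t)).exp.aestronglyMeasurable)
  filter_upwards with ω
  rw [Real.norm_eq_abs, abs_of_pos (Real.exp_pos _)]
  exact Real.exp_le_one_iff.mpr (by nlinarith [hZ0 ω])

lemma gumbel_stable_step {Ω : Type*} [MeasurableSpace Ω] (μ : Measure Ω) [IsProbabilityMeasure μ]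
    (l : ℝ) (hl : l ∈ Set.Ioo (0:ℝ) 1) (ε Z : Ω → ℝ)
    (hε : IsStdGumbel μ ε) (hZ : IsPosStable μ Z l) (hind : IndepFun ε Z μ) :
    IsStdGumbel μ (fun ω => l * ε ω + l * Real.log (Z ω)) := by
  obtain ⟨hεm, hεcdf⟩ := hε
  obtain ⟨hZm, hZ0, hZlap⟩ := hZ
  have hl0 : (0:ℝ) < l := hl.1
  -- Z is a.s. positive
  have hzero : μ {ω | Z ω = 0} = 0 := by
    have hms : MeasurableSet {ω | Z ω = 0} := hZm (measurableSet_singleton 0)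
    have key : ∀ n : ℕ, μ {ω | Z ω = 0} ≤ ENNReal.ofReal (Real.exp (-(n:ℝ))) := by
      intro n
      set t : ℝ := (n:ℝ) ^ (1/l) with ht_def
      have ht : 0 ≤ t := Real.rpow_nonneg (Nat.cast_nonneg n) _
      have htl : t ^ l = (n:ℝ) := by
        rw [ht_def, ← Real.rpow_mul (Nat.cast_nonneg n), one_div_mul_cancel (ne_of_gt hl0),
          Real.rpow_one]
      have hle : μ {ω | Z ω = 0} ≤ ∫⁻ ω, ENNReal.ofReal (Real.exp (-t * Z ω)) ∂μ := by
        rw [← lintegral_indicator_one hms]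
        apply lintegral_mono
        intro ω
        by_cases h : Z ω = 0
        · simp [Set.indicator_of_mem, h, Set.mem_setOf_eq]
        · simp [Set.indicator_of_notMem, h, Set.mem_setOf_eq]
      have heq : ∫⁻ ω, ENNReal.ofReal (Real.exp (-t * Z ω)) ∂μ
          = ENNReal.ofReal (Real.exp (-(n:ℝ))) := by
        rw [← MeasureTheory.ofReal_integral_eq_lintegral_ofReal
          (intExp μ Z hZm hZ0 t ht)
          (Filter.Eventually.of_forall fun ω => (Real.exp_pos _).le)]
        rw [hZlap t ht, htl]
      exact heq ▸ hle
    have htend : Filter.Tendsto (fun n : ℕ => ENNReal.ofReal (Real.exp (-(n:ℝ))))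
        Filter.atTop (nhds 0) := by
      rw [show (0 : ENNReal) = ENNReal.ofReal 0 by simp]
      apply ENNReal.tendsto_ofReal
      have := Real.tendsto_exp_atBot.comp (Filter.tendsto_neg_atBot_iff.mpr
        tendsto_natCast_atTop_atTop)
      exact this
    exact le_antisymm (ge_of_tendsto' htend key) (zero_le)
  have hpos : ∀ᵐ z ∂(μ.map Z), 0 < z := by
    rw [MeasureTheory.ae_map_iff hZm.aemeasurable (measurableSet_Ioi : MeasurableSet (Set.Ioi (0:ℝ)))]
    rw [MeasureTheory.ae_iff]
    refine measure_mono_null ?_ hzero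
    intro ω h
    exact le_antisymm (not_lt.mp h) (hZ0 ω)
  constructor
  · exact (hεm.const_mul l).add ((Real.measurable_log.comp hZm).const_mul l)
  intro x
  set c : ℝ := x / l with hc_def
  set t : ℝ := Real.exp (-c) with ht_def
  have ht : 0 ≤ t := (Real.exp_pos _).le
  have hset : {ω | l * ε ω + l * Real.log (Z ω) ≤ x} = {ω | ε ω ≤ c - Real.log (Z ω)} := by
    ext ω
    simp only [Set.mem_setOf_eq, hc_def]
    rw [le_sub_iff_add_le, le_div_iff₀ hl0]
    constructor <;> intro h <;> nlinarith
  rw [hset]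
  have hmap : μ.map (fun ω => (Z ω, ε ω)) = (μ.map Z).prod (μ.map ε) :=
    (indepFun_iff_map_prod_eq_prod_map_map hZm.aemeasurable hεm.aemeasurable).mp hind.symm
  have hSm : MeasurableSet {p : ℝ × ℝ | p.2 ≤ c - Real.log p.1} :=
    measurableSet_le measurable_snd (measurable_const.sub (Real.measurable_log.comp measurable_fst))
  have h1 : μ {ω | ε ω ≤ c - Real.log (Z ω)}
      = ((μ.map Z).prod (μ.map ε)) {p : ℝ × ℝ | p.2 ≤ c - Real.log p.1} := by
    rw [← hmap, Measure.map_apply (hZm.prodMk hεm) hSm]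
    rfl
  rw [h1, Measure.prod_apply hSm]
  have h2 : ∀ z : ℝ, (μ.map ε) (Prod.mk z ⁻¹' {p : ℝ × ℝ | p.2 ≤ c - Real.log p.1})
      = ENNReal.ofReal (Real.exp (-Real.exp (-(c - Real.log z)))) := by
    intro z
    rw [show Prod.mk z ⁻¹' {p : ℝ × ℝ | p.2 ≤ c - Real.log p.1} = {y : ℝ | y ≤ c - Real.log z}
      from rfl]
    rw [show {y : ℝ | y ≤ c - Real.log z} = Set.Iic (c - Real.log z) from rfl,
      Measure.map_apply hεm measurableSet_Iic]
    exact hεcdf _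
  simp_rw [h2]
  have h3 : ∫⁻ z, ENNReal.ofReal (Real.exp (-Real.exp (-(c - Real.log z)))) ∂(μ.map Z)
      = ∫⁻ z, ENNReal.ofReal (Real.exp (-t * z)) ∂(μ.map Z) := by
    apply lintegral_congr_ae
    filter_upwards [hpos] with z hz
    congr 2
    rw [neg_sub, Real.exp_sub, Real.exp_log hz, ht_def, Real.exp_neg, div_eq_mul_inv]
    ring
  rw [h3]
  have hint : Integrable (fun z => Real.exp (-t * z)) (μ.map Z) := by
    rw [integrable_map_measure ((measurable_id'.const_mul (-t)).exp.aestronglyMeasurable)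
      hZm.aemeasurable]
    exact intExp μ Z hZm hZ0 t ht
  rw [← MeasureTheory.ofReal_integral_eq_lintegral_ofReal hint
    (Filter.Eventually.of_forall fun z => (Real.exp_pos _).le)]
  rw [integral_map hZm.aemeasurable ((measurable_id'.const_mul (-t)).exp.aestronglyMeasurable)]
  rw [hZlap t ht]
  congr 2
  rw [ht_def, Real.rpow_def_of_pos (Real.exp_pos _), Real.log_exp, hc_def, neg_mul,
    div_mul_cancel₀ x (ne_of_gt hl0)]
/-- If `ε₁ ~ G(0,1)`, `Z₁ ~ P(l₁)`, `Z₂ ~ P(l₂)` are mutually independent, then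
`l₂ l₁ ε₁ + l₂ l₁ log Z₁ + l₂ log Z₂ ~ G(0,1)`. -/
theorem stmt_7 {Ω : Type*} [MeasurableSpace Ω] (μ : Measure Ω) [IsProbabilityMeasure μ]
    (l₁ l₂ : ℝ) (hl₁ : l₁ ∈ Set.Ioo (0 : ℝ) 1) (hl₂ : l₂ ∈ Set.Ioo (0 : ℝ) 1)
    (ε₁ Z₁ Z₂ : Ω → ℝ)
    (hε₁ : IsStdGumbel μ ε₁) (hZ₁ : IsPosStable μ Z₁ l₁) (hZ₂ : IsPosStable μ Z₂ l₂)
    (hindep : iIndepFun ![ε₁, Z₁, Z₂] μ) :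
    IsStdGumbel μ (fun ω => l₂ * l₁ * ε₁ ω + l₂ * l₁ * Real.log (Z₁ ω)
      + l₂ * Real.log (Z₂ ω)) := by
  have hmeas : ∀ i : Fin 3, Measurable (![ε₁, Z₁, Z₂] i) := by
    intro i
    fin_cases i
    · exact hε₁.1
    · exact hZ₁.1
    · exact hZ₂.1
  have hind12 : IndepFun ε₁ Z₁ μ := by
    have := hindep.indepFun (show (0 : Fin 3) ≠ 1 by decide)
    simpa using this
  have hY : IsStdGumbel μ (fun ω => l₁ * ε₁ ω + l₁ * Real.log (Z₁ ω)) :=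
    gumbel_stable_step μ l₁ hl₁ ε₁ Z₁ hε₁ hZ₁ hind12
  have hpair : IndepFun (fun ω => (ε₁ ω, Z₁ ω)) Z₂ μ := by
    have := hindep.indepFun_prodMk hmeas 0 1 2 (by decide) (by decide)
    simpa using this
  have hindY : IndepFun (fun ω => l₁ * ε₁ ω + l₁ * Real.log (Z₁ ω)) Z₂ μ := by
    have hφ : Measurable (fun p : ℝ × ℝ => l₁ * p.1 + l₁ * Real.log p.2) :=
      (measurable_fst.const_mul l₁).add ((Real.measurable_log.comp measurable_snd).const_mul l₁)
    have := hpair.comp hφ measurable_id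
    simpa [Function.comp_def] using this
  have hfinal := gumbel_stable_step μ l₂ hl₂ _ Z₂ hY hZ₂ hindY
  have heq : (fun ω => l₂ * (l₁ * ε₁ ω + l₁ * Real.log (Z₁ ω)) + l₂ * Real.log (Z₂ ω))
      = (fun ω => l₂ * l₁ * ε₁ ω + l₂ * l₁ * Real.log (Z₁ ω) + l₂ * Real.log (Z₂ ω)) := by
    funext ω; ring
  rw [← heq]
  exact hfinal
end
end

section
/- Let N be a nonempty finite index set of nests, for each n ∈ N let 𝒩ₙ be a nonempty finite set of alternatives (the sets 𝒩ₙ pairwise disjoint), and let λₙ ∈ (0,1] for each n ∈ N. Suppose {ε_j : j ∈ ⋃ₙ 𝒩ₙ} ∪ {Zₙ : n ∈ N} is a mutually independent family of random variables where each ε_j is standard Gumbel distributed and each Zₙ is nonnegative and positive stable with parameter λₙ. Define ε̃_j = λₙ·(ε_j + log Zₙ) for j ∈ 𝒩ₙ. Then for every real vector (a_j), P(ε̃_j ≤ a_j for all j) = exp(−Σ_{n∈N} (Σ_{j∈𝒩ₙ} exp(−a_j/λₙ))^{λₙ}); that is, (ε̃_j) has the nested logit (generalized extreme value) distribution. -/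
open MeasureTheory ProbabilityTheory Real
open scoped ENNReal

noncomputable section

theorem my_lintegral_fin_pi_prod {α : Type*} [MeasurableSpace α] {n : ℕ}
    (μ : Fin n → Measure α) [∀ i, SigmaFinite (μ i)]
    (f : Fin n → α → ℝ≥0∞) (hf : ∀ i, Measurable (f i)) :
    ∫⁻ x : Fin n → α, ∏ i, f i (x i) ∂Measure.pi μ = ∏ i, ∫⁻ x, f i x ∂μ i := by
  induction n with
  | zero => simp [Measure.pi_of_empty]
  | succ m ih =>
    have h := ((measurePreserving_piFinSuccAbove μ 0).symm
      (MeasurableEquiv.piFinSuccAbove (fun _ => α) 0))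
    rw [h.lintegral_map_equiv (fun x : Fin (m+1) → α => ∏ i, f i (x i))
      (MeasurableEquiv.piFinSuccAbove (fun _ => α) 0).symm]
    simp_rw [MeasurableEquiv.piFinSuccAbove_symm_apply, Fin.insertNthEquiv,
      Fin.prod_univ_succ, Fin.insertNth_zero, Equiv.coe_fn_mk, Fin.cons_zero, Fin.cons_succ,
      Fin.zero_succAbove, cast_eq]
    rw [lintegral_prod_mul (f := f 0) (g := fun y : Fin m → α => ∏ x, f x.succ (y x))
      (hf 0).aemeasurable
      (Finset.univ.measurable_prod fun i _ =>
        (hf i.succ).comp (measurable_pi_apply i)).aemeasurable,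
      ih (fun j => μ j.succ) (fun j => f j.succ) (fun j => hf j.succ)]

theorem my_lintegral_fintype_pi_prod {ι : Type*} [Fintype ι] {α : Type*} [MeasurableSpace α]
    (μ : ι → Measure α) [∀ i, SigmaFinite (μ i)]
    (f : ι → α → ℝ≥0∞) (hf : ∀ i, Measurable (f i)) :
    ∫⁻ x : ι → α, ∏ i, f i (x i) ∂Measure.pi μ = ∏ i, ∫⁻ x, f i x ∂μ i := by
  let e := (Fintype.equivFin ι).symm
  rw [(measurePreserving_piCongrLeft μ e).lintegral_map_equiv
    (fun x : ι → α => ∏ i, f i (x i)) (MeasurableEquiv.piCongrLeft (fun _ => α) e)]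
  simp_rw [← e.prod_comp, MeasurableEquiv.coe_piCongrLeft, Equiv.piCongrLeft_apply_apply]
  exact my_lintegral_fin_pi_prod (fun k => μ (e k)) (fun k => f (e k)) (fun k => hf (e k))

/-- Representation of the single-layer nested logit model: if the `ε_j` are i.i.d. standard
Gumbel and the `Z_n` are positive stable with parameter `λ_n`, all mutually independent, then
the vector `ε̃_j = λ_n (ε_j + log Z_n)` (for `j` in nest `n`) has the nested logit (GEV) cdf. -/
theorem stmt_8 {Ω : Type*} [MeasurableSpace Ω] (μ : Measure Ω) [IsProbabilityMeasure μ]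
    {N : Type*} [Fintype N] [Nonempty N]
    (J : N → Type*) [∀ n, Fintype (J n)] [∀ n, Nonempty (J n)]
    (lam : N → ℝ) (hlam : ∀ n, lam n ∈ Set.Ioc (0 : ℝ) 1)
    (X : ((Σ n, J n) ⊕ N) → Ω → ℝ)
    (hindep : iIndepFun X μ)
    (hgumbel : ∀ j : Σ n, J n, IsStdGumbel μ (X (Sum.inl j)))
    (hstable : ∀ n : N, IsPosStable μ (X (Sum.inr n)) (lam n)) :
    ∀ a : (Σ n, J n) → ℝ,
      μ {ω | ∀ j : Σ n, J n,
          lam j.1 * (X (Sum.inl j) ω + Real.log (X (Sum.inr j.1) ω)) ≤ a j}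
        = ENNReal.ofReal (Real.exp
            (-(∑ n, (∑ j : J n, Real.exp (-a ⟨n, j⟩ / lam n)) ^ lam n))) := by
  intro a
  classical
  have hXm : ∀ i, Measurable (X i) := by
    rintro (j | n)
    exacts [(hgumbel j).1, (hstable n).1]
  have hΦm : Measurable (fun ω (i : (Σ n, J n) ⊕ N) => X i ω) := measurable_pi_lambda _ hXm
  set ν : ((Σ n, J n) ⊕ N) → Measure ℝ := fun i => μ.map (X i) with hνdef
  haveI hprob : ∀ i, IsProbabilityMeasure (ν i) :=
    fun i => Measure.isProbabilityMeasure_map (hXm i).aemeasurable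
  -- the joint law is the product of the marginals
  have hmap : μ.map (fun ω i => X i ω) = Measure.pi ν := by
    refine (Measure.pi_eq fun s hs => ?_).symm
    rw [Measure.map_apply hΦm (MeasurableSet.univ_pi hs)]
    have hpre : (fun ω (i : (Σ n, J n) ⊕ N) => X i ω) ⁻¹' Set.pi Set.univ s
        = ⋂ i ∈ Finset.univ, X i ⁻¹' s i := by
      ext ω; simp [Set.mem_pi]
    rw [hpre, hindep.measure_inter_preimage_eq_mul Finset.univ (fun i _ => hs i)]
    exact Finset.prod_congr rfl fun i _ => (Measure.map_apply (hXm i) (hs i)).symm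
  -- Laplace transform in lintegral form
  have hlap : ∀ (n : N) (t : ℝ), 0 ≤ t →
      ∫⁻ ω, ENNReal.ofReal (Real.exp (-(t * X (Sum.inr n) ω))) ∂μ
        = ENNReal.ofReal (Real.exp (-t ^ lam n)) := by
    intro n t ht
    have hint : Integrable (fun ω => Real.exp (-(t * X (Sum.inr n) ω))) μ := by
      refine Integrable.mono' (integrable_const 1)
        ((((hXm _).const_mul t).neg.exp).aestronglyMeasurable) (ae_of_all _ fun ω => ?_)
      rw [Real.norm_eq_abs, abs_of_pos (Real.exp_pos _)]
      refine Real.exp_le_one_iff.2 ?_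
      have := (hstable n).2.1 ω
      nlinarith
    rw [← ofReal_integral_eq_lintegral_ofReal hint (ae_of_all _ fun ω => (Real.exp_pos _).le)]
    congr 1
    rw [← (hstable n).2.2 t ht]
    exact integral_congr_ae (ae_of_all _ fun ω => by simp only [neg_mul])
  -- rewrite the event
  set c : (Σ n, J n) → ℝ → ℝ := fun j z => a j / lam j.1 - Real.log z with hc
  have hev : {ω | ∀ j : Σ n, J n,
        lam j.1 * (X (Sum.inl j) ω + Real.log (X (Sum.inr j.1) ω)) ≤ a j}
      = (fun ω (i : (Σ n, J n) ⊕ N) => X i ω) ⁻¹'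
          {x | ∀ j : Σ n, J n, x (Sum.inl j) ≤ c j (x (Sum.inr j.1))} := by
    ext ω
    simp only [Set.mem_setOf_eq, Set.mem_preimage, hc]
    refine forall_congr' fun j => ?_
    rw [mul_comm (lam j.1), ← le_div_iff₀ (hlam j.1).1, ← le_sub_iff_add_le]
  have hT : MeasurableSet {x : ((Σ n, J n) ⊕ N) → ℝ |
      ∀ j : Σ n, J n, x (Sum.inl j) ≤ c j (x (Sum.inr j.1))} := by
    rw [Set.setOf_forall]
    exact MeasurableSet.iInter fun j => measurableSet_le (measurable_pi_apply _)
      (measurable_const.sub (Real.measurable_log.comp (measurable_pi_apply _)))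
  rw [hev, ← Measure.map_apply hΦm hT, hmap]
  -- split the product over the sum type
  have hsplit := measurePreserving_sumPiEquivProdPi (μ := ν)
  set S : Set (((Σ n, J n) → ℝ) × (N → ℝ)) :=
    {p | ∀ j : Σ n, J n, p.1 j ≤ c j (p.2 j.1)} with hS
  have hSm : MeasurableSet S := by
    rw [hS, Set.setOf_forall]
    exact MeasurableSet.iInter fun j => measurableSet_le measurable_fst.eval
      (measurable_const.sub (Real.measurable_log.comp measurable_snd.eval))
  have hTS : {x : ((Σ n, J n) ⊕ N) → ℝ |
      ∀ j : Σ n, J n, x (Sum.inl j) ≤ c j (x (Sum.inr j.1))}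
      = MeasurableEquiv.sumPiEquivProdPi (fun _ : (Σ n, J n) ⊕ N => ℝ) ⁻¹' S := rfl
  rw [hTS, hsplit.measure_preimage hSm.nullMeasurableSet, Measure.prod_apply_symm hSm]
  -- inner probability: product of Gumbel cdfs
  have hcdf : ∀ (j : Σ n, J n) (x : ℝ), ν (Sum.inl j) (Set.Iic x)
      = ENNReal.ofReal (Real.exp (-Real.exp (-x))) := by
    intro j x
    rw [hνdef, Measure.map_apply (hXm _) measurableSet_Iic]
    exact (hgumbel j).2 x
  have hinner : ∀ z : N → ℝ,
      (Measure.pi fun j : Σ n, J n => ν (Sum.inl j)) ((fun x => (x, z)) ⁻¹' S)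
        = ∏ j : Σ n, J n, ENNReal.ofReal (Real.exp (-Real.exp (-(c j (z j.1))))) := by
    intro z
    have hps : ((fun x : (Σ n, J n) → ℝ => (x, z)) ⁻¹' S)
        = Set.pi Set.univ fun j : Σ n, J n => Set.Iic (c j (z j.1)) := by
      ext x; simp [hS, Set.mem_pi, Pi.le_def]
    rw [hps, Measure.pi_pi]
    exact Finset.prod_congr rfl fun j _ => hcdf j _
  simp_rw [hinner]
  -- positivity of the stable variables
  have hZiic : ∀ n, ν (Sum.inr n) (Set.Iic 0) = 0 := by
    intro n
    have h0 : X (Sum.inr n) ⁻¹' (Set.Iic 0) = {ω | X (Sum.inr n) ω = 0} := by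
      ext ω
      simp only [Set.mem_preimage, Set.mem_Iic, Set.mem_setOf_eq]
      exact ⟨fun h => le_antisymm h ((hstable n).2.1 ω), fun h => h.le⟩
    rw [hνdef, Measure.map_apply (hXm _) measurableSet_Iic, h0]
    have hsm : MeasurableSet {ω | X (Sum.inr n) ω = 0} :=
      (hXm (Sum.inr n)) (measurableSet_singleton 0)
    have hb : ∀ t : ℝ, 0 ≤ t →
        μ {ω | X (Sum.inr n) ω = 0} ≤ ENNReal.ofReal (Real.exp (-t ^ lam n)) := by
      intro t ht
      calc μ {ω | X (Sum.inr n) ω = 0}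
          = ∫⁻ ω in {ω | X (Sum.inr n) ω = 0},
              ENNReal.ofReal (Real.exp (-(t * X (Sum.inr n) ω))) ∂μ := by
            rw [← setLIntegral_one]
            exact setLIntegral_congr_fun hsm (
              fun ω (hω : X (Sum.inr n) ω = 0) => by rw [hω]; simp)
        _ ≤ ∫⁻ ω, ENNReal.ofReal (Real.exp (-(t * X (Sum.inr n) ω))) ∂μ :=
            setLIntegral_le_lintegral _ _
        _ = ENNReal.ofReal (Real.exp (-t ^ lam n)) := hlap n t ht
    have htend : Filter.Tendsto (fun k : ℕ => ENNReal.ofReal (Real.exp (-(k : ℝ) ^ lam n)))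
        Filter.atTop (nhds 0) := by
      rw [← ENNReal.ofReal_zero]
      apply ENNReal.tendsto_ofReal
      have h1 : Filter.Tendsto (fun k : ℕ => ((k : ℝ) ^ lam n)) Filter.atTop Filter.atTop :=
        (tendsto_rpow_atTop (hlam n).1).comp tendsto_natCast_atTop_atTop
      exact Real.tendsto_exp_atBot.comp (Filter.tendsto_neg_atTop_atBot.comp h1)
    exact le_zero_iff.1 (ge_of_tendsto' htend fun k => hb k (Nat.cast_nonneg k))
  have hae : ∀ᵐ z : N → ℝ ∂(Measure.pi fun n => ν (Sum.inr n)), ∀ n, 0 < z n := by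
    rw [MeasureTheory.ae_all_iff]
    intro n
    rw [ae_iff]
    have hset : {z : N → ℝ | ¬ 0 < z n}
        = Set.pi Set.univ (Function.update (fun _ : N => (Set.univ : Set ℝ)) n (Set.Iic 0)) := by
      ext z
      simp only [Set.mem_setOf_eq, not_lt, Set.mem_pi, Set.mem_univ, forall_true_left]
      constructor
      · intro h m
        rcases eq_or_ne m n with rfl | hm
        · simpa using h
        · simp [Function.update_of_ne hm]
      · intro h
        simpa using h n
    rw [hset, Measure.pi_pi]
    refine Finset.prod_eq_zero (Finset.mem_univ n) ?_
    simp [hZiic n]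
  set Sf : N → ℝ := fun n => ∑ i : J n, Real.exp (-a ⟨n, i⟩ / lam n) with hSf
  have hSnonneg : ∀ n, 0 ≤ Sf n := fun n => Finset.sum_nonneg fun i _ => (Real.exp_pos _).le
  have hcong : ∫⁻ z, ∏ j : Σ n, J n, ENNReal.ofReal (Real.exp (-Real.exp (-(c j (z j.1)))))
        ∂(Measure.pi fun n => ν (Sum.inr n))
      = ∫⁻ z, ∏ n, ENNReal.ofReal (Real.exp (-(Sf n * z n)))
        ∂(Measure.pi fun n => ν (Sum.inr n)) := by
    refine lintegral_congr_ae (hae.mono fun z hz => ?_)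
    dsimp only
    rw [← ENNReal.ofReal_prod_of_nonneg (fun j _ => (Real.exp_pos _).le),
        ← ENNReal.ofReal_prod_of_nonneg (fun n _ => (Real.exp_pos _).le)]
    congr 1
    rw [← Real.exp_sum, ← Real.exp_sum]
    congr 1
    have hzexp : ∀ j : Σ n, J n,
        Real.exp (-(c j (z j.1))) = Real.exp (-a j / lam j.1) * z j.1 := by
      intro j
      rw [hc]
      rw [neg_sub, sub_eq_add_neg, Real.exp_add, Real.exp_log (hz j.1), ← neg_div]
      ring
    simp_rw [hzexp]
    rw [← Finset.univ_sigma_univ, Finset.sum_sigma]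
    refine Finset.sum_congr rfl fun n _ => ?_
    have hm : Sf n * z n = ∑ i : J n, Real.exp (-a ⟨n, i⟩ / lam n) * z n := Finset.sum_mul ..
    rw [hm, Finset.sum_neg_distrib]
  rw [hcong, my_lintegral_fintype_pi_prod (fun n => ν (Sum.inr n))
    (fun n t => ENNReal.ofReal (Real.exp (-(Sf n * t))))
    (fun n => (((measurable_id.const_mul (Sf n)).neg).exp).ennreal_ofReal)]
  have hint : ∀ n, ∫⁻ t, ENNReal.ofReal (Real.exp (-(Sf n * t))) ∂ν (Sum.inr n)
      = ENNReal.ofReal (Real.exp (-(Sf n) ^ lam n)) := by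
    intro n
    rw [show ν (Sum.inr n) = μ.map (X (Sum.inr n)) from rfl,
      lintegral_map (f := fun t => ENNReal.ofReal (Real.exp (-(Sf n * t))))
        ((((measurable_id.const_mul (Sf n)).neg).exp).ennreal_ofReal) (hXm _)]
    exact hlap n (Sf n) (hSnonneg n)
  simp_rw [hint]
  rw [← ENNReal.ofReal_prod_of_nonneg (fun n _ => (Real.exp_pos _).le), ← Real.exp_sum,
    Finset.sum_neg_distrib]

end
end

section
/- For each λ ∈ (0,1) let Z_λ be a nonnegative random variable that is positive stable with parameter λ, and set η_λ = λ·log Z_λ. Then for every x ∈ ℝ, P(η_λ ≤ x) → exp(−exp(−x)) as λ → 0⁺; that is, η_λ converges in distribution to the standard Gumbel distribution as λ → 0⁺. -/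
open MeasureTheory ProbabilityTheory Real

noncomputable section

namespace StableGumbelAux

variable {Ω : Type*} [MeasurableSpace Ω] {μ : Measure Ω}

lemma integrable_exp_neg [IsFiniteMeasure μ] {Z : Ω → ℝ} (hZ : Measurable Z)
    (hZ0 : ∀ ω, 0 ≤ Z ω) {t : ℝ} (ht : 0 ≤ t) :
    Integrable (fun ω => Real.exp (-t * Z ω)) μ := by
  refine Integrable.mono' (integrable_const 1)
    ((hZ.const_mul (-t)).exp.aestronglyMeasurable) ?_
  filter_upwards with ω
  rw [Real.norm_eq_abs, abs_of_nonneg (Real.exp_pos _).le, Real.exp_le_one_iff]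
  have := hZ0 ω
  nlinarith

lemma upper_bound [IsProbabilityMeasure μ] {Z : Ω → ℝ} (hZ : Measurable Z)
    (hZ0 : ∀ ω, 0 ≤ Z ω) {t : ℝ} (ht : 0 ≤ t) (s : ℝ) :
    Real.exp (-(t * s)) * (μ {ω | Z ω ≤ s}).toReal ≤ ∫ ω, Real.exp (-t * Z ω) ∂μ := by
  have hA : MeasurableSet {ω | Z ω ≤ s} := hZ measurableSet_Iic
  have h1 : ∫ ω, Set.indicator {ω | Z ω ≤ s} (fun _ => Real.exp (-(t * s))) ω ∂μ
      = (μ {ω | Z ω ≤ s}).toReal • Real.exp (-(t * s)) :=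
    integral_indicator_const _ hA
  rw [smul_eq_mul, mul_comm ((μ {ω | Z ω ≤ s}).toReal)] at h1
  rw [← h1]
  refine integral_mono ((integrable_const _).indicator hA)
    (integrable_exp_neg hZ hZ0 ht) fun ω => ?_
  by_cases hω : ω ∈ {ω | Z ω ≤ s}
  · rw [Set.indicator_of_mem hω]
    apply Real.exp_le_exp.2
    have : Z ω ≤ s := hω
    nlinarith
  · rw [Set.indicator_of_notMem hω]
    exact (Real.exp_pos _).le

lemma lower_bound [IsProbabilityMeasure μ] {Z : Ω → ℝ} (hZ : Measurable Z)
    (hZ0 : ∀ ω, 0 ≤ Z ω) {t : ℝ} (ht : 0 ≤ t) (s : ℝ) :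
    ∫ ω, Real.exp (-t * Z ω) ∂μ ≤ (μ {ω | Z ω ≤ s}).toReal + Real.exp (-(t * s)) := by
  have hA : MeasurableSet {ω | Z ω ≤ s} := hZ measurableSet_Iic
  have h1 : ∫ ω, (Set.indicator {ω | Z ω ≤ s} (fun _ => (1 : ℝ)) ω
      + Real.exp (-(t * s))) ∂μ = (μ {ω | Z ω ≤ s}).toReal + Real.exp (-(t * s)) := by
    rw [integral_add ((integrable_const _).indicator hA) (integrable_const _),
      integral_indicator_const _ hA, integral_const]
    simp
    rfl
  rw [← h1]
  refine integral_mono (integrable_exp_neg hZ hZ0 ht)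
    (((integrable_const _).indicator hA).add (integrable_const _)) fun ω => ?_
  by_cases hω : ω ∈ {ω | Z ω ≤ s}
  · rw [Set.indicator_of_mem hω]
    have : Real.exp (-t * Z ω) ≤ 1 := by
      rw [Real.exp_le_one_iff]; have := hZ0 ω; nlinarith
    nlinarith [(Real.exp_pos (-(t * s))).le]
  · rw [Set.indicator_of_notMem hω]
    have hω' : s < Z ω := not_le.1 hω
    have : Real.exp (-t * Z ω) ≤ Real.exp (-(t * s)) := by
      apply Real.exp_le_exp.2; nlinarith
    linarith

lemma null_zero [IsProbabilityMeasure μ] {Z : Ω → ℝ} {l : ℝ} (hl : 0 < l)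
    (hZ : Measurable Z) (hZ0 : ∀ ω, 0 ≤ Z ω)
    (hlap : ∀ t : ℝ, 0 ≤ t → ∫ ω, Real.exp (-t * Z ω) ∂μ = Real.exp (-t ^ l)) :
    μ {ω | Z ω = 0} = 0 := by
  have hA : MeasurableSet {ω | Z ω = 0} := hZ (measurableSet_singleton 0)
  have key : ∀ n : ℕ, (μ {ω | Z ω = 0}).toReal ≤ Real.exp (-(n : ℝ) ^ l) := by
    intro n
    rw [← hlap n (Nat.cast_nonneg n)]
    have h1 : ∫ ω, Set.indicator {ω | Z ω = 0} (fun _ => (1 : ℝ)) ω ∂μ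
        = (μ {ω | Z ω = 0}).toReal • (1 : ℝ) := integral_indicator_const _ hA
    rw [smul_eq_mul, mul_one] at h1
    rw [← h1]
    refine integral_mono ((integrable_const _).indicator hA)
      (integrable_exp_neg hZ hZ0 (Nat.cast_nonneg n)) fun ω => ?_
    by_cases hω : ω ∈ {ω | Z ω = 0}
    · rw [Set.indicator_of_mem hω]
      have : Z ω = 0 := hω
      simp [this]
    · rw [Set.indicator_of_notMem hω]
      exact (Real.exp_pos _).le
  have hlim : Filter.Tendsto (fun n : ℕ => Real.exp (-(n : ℝ) ^ l)) Filter.atTop (nhds 0) := by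
    have h1 : Filter.Tendsto (fun n : ℕ => ((n : ℝ)) ^ l) Filter.atTop Filter.atTop :=
      (tendsto_rpow_atTop hl).comp tendsto_natCast_atTop_atTop
    exact Real.tendsto_exp_atBot.comp (Filter.tendsto_neg_atTop_atBot.comp h1)
  have hle : (μ {ω | Z ω = 0}).toReal ≤ 0 :=
    ge_of_tendsto hlim (Filter.eventually_atTop.2 ⟨0, fun n _ => key n⟩)
  have h0 : (μ {ω | Z ω = 0}).toReal = 0 :=
    le_antisymm hle ENNReal.toReal_nonneg
  exact (ENNReal.toReal_eq_zero_iff _).1 h0 |>.resolve_right (measure_ne_top μ _)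

end StableGumbelAux

/-- As `l → 0⁻`, `η_l = l log Z_l` (with `Z_l` positive stable with parameter `l`) converges
in distribution to the standard Gumbel distribution: its cdf converges pointwise to
`x ↦ exp (-exp (-x))`. -/
theorem stmt_15 {Ω : Type*} [MeasurableSpace Ω] (μ : Measure Ω) [IsProbabilityMeasure μ]
    (Z : ℝ → Ω → ℝ)
    (hstable : ∀ l ∈ Set.Ioo (0 : ℝ) 1, IsPosStable μ (Z l) l) :
    ∀ x : ℝ,
      Filter.Tendsto (fun l => (μ {ω | l * Real.log (Z l ω) ≤ x}).toReal)
        (nhdsWithin 0 (Set.Ioo (0 : ℝ) 1)) (nhds (Real.exp (-Real.exp (-x)))) := by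
  intro x
  -- Key: for each l ∈ (0,1), the cdf value equals μ {Z l ≤ exp (x/l)}.toReal,
  -- which is sandwiched between explicit functions of l tending to exp(-exp(-x)).
  set L := Real.exp (-Real.exp (-x)) with hL
  -- lower and upper bounding functions
  set g : ℝ → ℝ := fun l => Real.exp (-(Real.exp (-(Real.log l * l)) * Real.exp (-x)))
      - Real.exp (-l⁻¹) with hg
  set h : ℝ → ℝ := fun l => Real.exp l * Real.exp (-(Real.exp (Real.log l * l)
      * Real.exp (-x))) with hh
  have hmono : nhdsWithin (0 : ℝ) (Set.Ioo 0 1) ≤ nhdsWithin 0 (Set.Ioi 0) :=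
    nhdsWithin_mono 0 Set.Ioo_subset_Ioi_self
  have hloglim : Filter.Tendsto (fun l : ℝ => Real.log l * l)
      (nhdsWithin 0 (Set.Ioi 0)) (nhds 0) := by
    have := tendsto_log_mul_rpow_nhdsGT_zero (zero_lt_one)
    simpa [Real.rpow_one] using this
  have hglim : Filter.Tendsto g (nhdsWithin 0 (Set.Ioo 0 1)) (nhds L) := by
    have h1 : Filter.Tendsto (fun l : ℝ => Real.exp (-(Real.exp (-(Real.log l * l))
        * Real.exp (-x)))) (nhdsWithin 0 (Set.Ioi 0)) (nhds (Real.exp (-(1 * Real.exp (-x))))) := by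
      apply Real.continuous_exp.continuousAt.tendsto.comp
      apply Filter.Tendsto.neg
      apply Filter.Tendsto.mul_const
      have : Filter.Tendsto (fun l : ℝ => -(Real.log l * l))
          (nhdsWithin 0 (Set.Ioi 0)) (nhds 0) := by
        simpa using hloglim.neg
      simpa [Function.comp_def] using Real.continuous_exp.continuousAt.tendsto.comp this
    have h2 : Filter.Tendsto (fun l : ℝ => Real.exp (-l⁻¹))
        (nhdsWithin 0 (Set.Ioi 0)) (nhds 0) :=
      Real.tendsto_exp_atBot.comp (Filter.tendsto_neg_atTop_atBot.comp tendsto_inv_nhdsGT_zero)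
    have := (h1.sub h2).mono_left hmono
    simpa [hg, hL] using this
  have hhlim : Filter.Tendsto h (nhdsWithin 0 (Set.Ioo 0 1)) (nhds L) := by
    have h1 : Filter.Tendsto (fun l : ℝ => Real.exp l) (nhdsWithin 0 (Set.Ioi 0))
        (nhds 1) := by
      have := Real.continuous_exp.continuousAt (x := (0:ℝ))
      simpa using this.tendsto.mono_left nhdsWithin_le_nhds
    have h2 : Filter.Tendsto (fun l : ℝ => Real.exp (-(Real.exp (Real.log l * l)
        * Real.exp (-x)))) (nhdsWithin 0 (Set.Ioi 0)) (nhds (Real.exp (-(1 * Real.exp (-x))))) := by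
      apply Real.continuous_exp.continuousAt.tendsto.comp
      apply Filter.Tendsto.neg
      apply Filter.Tendsto.mul_const
      simpa [Function.comp_def] using Real.continuous_exp.continuousAt.tendsto.comp hloglim
    have := (h1.mul h2).mono_left hmono
    simpa [hh, hL] using this
  refine tendsto_of_tendsto_of_tendsto_of_le_of_le' hglim hhlim ?_ ?_
  all_goals {
    filter_upwards [self_mem_nhdsWithin] with l hl
    obtain ⟨hl0, hl1⟩ := hl
    obtain ⟨hZm, hZ0, hlap⟩ := hstable l ⟨hl0, hl1⟩
    -- the set equality up to null set {Z l = 0}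
    have hnull : μ {ω | Z l ω = 0} = 0 :=
      StableGumbelAux.null_zero hl0 hZm hZ0 hlap
    have hseteq : μ {ω | l * Real.log (Z l ω) ≤ x} = μ {ω | Z l ω ≤ Real.exp (x / l)} := by
      have key : ∀ ω, Z l ω ≠ 0 →
          (l * Real.log (Z l ω) ≤ x ↔ Z l ω ≤ Real.exp (x / l)) := by
        intro ω hne
        have hpos : 0 < Z l ω := lt_of_le_of_ne (hZ0 ω) (Ne.symm hne)
        rw [← Real.log_le_iff_le_exp hpos, le_div_iff₀ hl0, mul_comm]
      have e1 : {ω | l * Real.log (Z l ω) ≤ x} \ {ω | Z l ω = 0}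
          = {ω | Z l ω ≤ Real.exp (x / l)} \ {ω | Z l ω = 0} := by
        ext ω
        simp only [Set.mem_diff, Set.mem_setOf_eq]
        exact and_congr_left fun hne => key ω hne
      calc μ {ω | l * Real.log (Z l ω) ≤ x}
          = μ ({ω | l * Real.log (Z l ω) ≤ x} \ {ω | Z l ω = 0}) :=
            (measure_diff_null hnull).symm
        _ = μ ({ω | Z l ω ≤ Real.exp (x / l)} \ {ω | Z l ω = 0}) := by rw [e1]
        _ = μ {ω | Z l ω ≤ Real.exp (x / l)} := measure_diff_null hnull
    rw [hseteq]
    set s : ℝ := Real.exp (x / l) with hs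
    -- bounds from Laplace transform
    first
    | -- lower bound goal : g l ≤ F l
      { -- choose t = l⁻¹ * exp(-(x/l))
        have ht0 : (0:ℝ) ≤ l⁻¹ * Real.exp (-(x / l)) :=
          mul_nonneg (inv_nonneg.2 hl0.le) (Real.exp_pos _).le
        have hbd := StableGumbelAux.lower_bound (μ := μ) hZm hZ0 ht0 s
        rw [hlap _ ht0] at hbd
        have hts : l⁻¹ * Real.exp (-(x / l)) * s = l⁻¹ := by
          rw [hs, mul_assoc, ← Real.exp_add]
          simp
        have htl : (l⁻¹ * Real.exp (-(x / l))) ^ l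
            = Real.exp (-(Real.log l * l)) * Real.exp (-x) := by
          rw [Real.mul_rpow (inv_nonneg.2 hl0.le) (Real.exp_pos _).le,
            ← Real.exp_log (inv_pos.2 hl0), ← Real.exp_mul, ← Real.exp_mul,
            Real.log_inv]
          congr 1
          · ring_nf
          · field_simp
        rw [hts, htl] at hbd
        simp only [hg]
        linarith }
    | -- upper bound goal : F l ≤ h l
      { -- choose t = l * exp(-(x/l))
        have ht0 : (0:ℝ) ≤ l * Real.exp (-(x / l)) :=
          mul_nonneg hl0.le (Real.exp_pos _).le
        have hbd := StableGumbelAux.upper_bound (μ := μ) hZm hZ0 ht0 s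
        rw [hlap _ ht0] at hbd
        have hts : l * Real.exp (-(x / l)) * s = l := by
          rw [hs, mul_assoc, ← Real.exp_add]
          simp
        have htl : (l * Real.exp (-(x / l))) ^ l
            = Real.exp (Real.log l * l) * Real.exp (-x) := by
          rw [Real.mul_rpow hl0.le (Real.exp_pos _).le,
            ← Real.exp_log hl0, ← Real.exp_mul, ← Real.exp_mul]
          congr 1
          · rw [Real.log_exp]
          · field_simp
        rw [hts, htl] at hbd
        simp only [hh]
        have hmul := mul_le_mul_of_nonneg_left hbd (Real.exp_pos l).le
        calc (μ {ω | Z l ω ≤ s}).toReal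
            = Real.exp l * (Real.exp (-l) * (μ {ω | Z l ω ≤ s}).toReal) := by
              rw [← mul_assoc, ← Real.exp_add]; simp
          _ ≤ Real.exp l * Real.exp (-(Real.exp (Real.log l * l) * Real.exp (-x))) := hmul }
  }
end
end

section
/- Let α > 2 and λ ∈ (0,1). Let ε₁, ε₂, Z be mutually independent random variables with ε₁, ε₂ standard Gumbel distributed and Z nonnegative and positive stable with parameter λ, and set δ₁ = exp((λ/α)(ε₁ + log Z)) and δ₂ = exp((λ/α)(ε₂ + log Z)). Then δ₁δ₂ is integrable and E[δ₁δ₂] = Γ(1 − λ/α)² · Γ(1 − 2/α) / Γ(1 − 2λ/α), where Γ is the Gamma function. -/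
open MeasureTheory ProbabilityTheory Real

noncomputable section

open Set Filter

lemma two_mul_sub_one_le_exp (t : ℝ) : 2*t - 1 ≤ Real.exp t := by
  rcases le_or_gt t (1/2) with h | h
  · nlinarith [Real.exp_pos t]
  · have h1 := Real.add_one_le_exp (t - 1)
    have h2 : Real.exp t = Real.exp (t-1) * Real.exp 1 := by
      rw [← Real.exp_add]; ring_nf
    have h3 : (2:ℝ) ≤ Real.exp 1 := by
      have := Real.add_one_le_exp (1:ℝ); linarith
    nlinarith [Real.exp_pos (t-1)]

lemma gumbel_pdf_int (a : ℝ) :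
    IntegrableOn (fun x => Real.exp (-x - Real.exp (-x))) (Iic a) := by
  apply Integrable.mono' (((integrableOn_exp_Iic a).const_mul (Real.exp 1)))
  · exact (Continuous.aestronglyMeasurable (by continuity))
  · refine ae_of_all _ fun x => ?_
    rw [Real.norm_eq_abs, abs_of_pos (Real.exp_pos _), ← Real.exp_add]
    apply Real.exp_le_exp.2
    have := two_mul_sub_one_le_exp (-x)
    linarith

lemma gumbel_deriv (x : ℝ) :
    HasDerivAt (fun y : ℝ => Real.exp (-Real.exp (-y))) (Real.exp (-x - Real.exp (-x))) x := by
  have h1 : HasDerivAt (fun y : ℝ => -y) (-1) x := (hasDerivAt_id x).neg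
  have h4 := (h1.exp.neg).exp
  convert h4 using 1
  · rfl
  show Real.exp (-x - Real.exp (-x)) = Real.exp (-Real.exp (-x)) * -(Real.exp (-x) * -1)
  rw [show Real.exp (-Real.exp (-x)) * -(Real.exp (-x) * -1)
      = Real.exp (-Real.exp (-x)) * Real.exp (-x) by ring, ← Real.exp_add]
  ring_nf

lemma gumbel_Iic (a : ℝ) :
    (volume.withDensity fun x => ENNReal.ofReal (Real.exp (-x - Real.exp (-x)))) (Iic a)
      = ENNReal.ofReal (Real.exp (-Real.exp (-a))) := by
  rw [withDensity_apply _ measurableSet_Iic,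
      ← ofReal_integral_eq_lintegral_ofReal (gumbel_pdf_int a)
        (ae_of_all _ fun x => (Real.exp_pos _).le)]
  congr 1
  have htend : Tendsto (fun y : ℝ => Real.exp (-Real.exp (-y))) atBot (nhds 0) := by
    apply Real.tendsto_exp_atBot.comp
    apply (tendsto_neg_atTop_atBot).comp
    exact Real.tendsto_exp_atTop.comp tendsto_neg_atBot_atTop
  have := integral_Iic_of_hasDerivAt_of_tendsto' (f := fun y => Real.exp (-Real.exp (-y)))
    (fun x _ => gumbel_deriv x) (gumbel_pdf_int a) htend
  simpa using this

lemma gumbel_range : (fun x : ℝ => Real.exp (-x)) '' univ = Ioi 0 := by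
  ext y
  simp only [image_univ, mem_range, mem_Ioi]
  constructor
  · rintro ⟨x, rfl⟩; exact Real.exp_pos _
  · intro hy; exact ⟨-Real.log y, by rw [neg_neg, Real.exp_log hy]⟩

lemma gumbel_cov {s : ℝ} (x : ℝ) :
    |(-Real.exp (-x))| • ((fun u => Real.exp (-u) * u ^ (-s)) (Real.exp (-x)))
      = Real.exp (-x - Real.exp (-x)) * Real.exp (s * x) := by
  simp only [abs_neg, abs_of_pos (Real.exp_pos _), smul_eq_mul,
    ← Real.exp_mul, show -x * -s = s * x by ring, ← Real.exp_add]
  ring_nf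

lemma gumbel_hderiv (x : ℝ) :
    HasDerivWithinAt (fun x : ℝ => Real.exp (-x)) (-Real.exp (-x)) univ x := by
  have h1 : HasDerivAt (fun y : ℝ => -y) (-1) x := (hasDerivAt_id x).neg
  have h2 := h1.exp.hasDerivWithinAt (s := univ)
  simpa using h2

lemma gumbel_mgf_vol {s : ℝ} (hs0 : 0 < s) (hs1 : s < 1) :
    Integrable (fun x => Real.exp (-x - Real.exp (-x)) * Real.exp (s * x)) volume ∧
    ∫ x, Real.exp (-x - Real.exp (-x)) * Real.exp (s * x) = Real.Gamma (1 - s) := by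
  have h1s : 0 < 1 - s := by linarith
  have hinj : InjOn (fun x : ℝ => Real.exp (-x)) univ :=
    (Real.exp_injective.comp neg_injective).injOn
  have hGint : IntegrableOn (fun u : ℝ => Real.exp (-u) * u ^ (-s)) (Ioi 0) := by
    have := Real.GammaIntegral_convergent h1s
    have h15 : 1 - s - 1 = -s := by ring
    rwa [h15] at this
  have hint : Integrable (fun x => Real.exp (-x - Real.exp (-x)) * Real.exp (s * x)) volume := by
    have := (integrableOn_image_iff_integrableOn_abs_deriv_smul MeasurableSet.univ
      (fun x _ => gumbel_hderiv x) hinj (fun u => Real.exp (-u) * u ^ (-s))).mp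
      (gumbel_range ▸ hGint)
    rw [integrableOn_univ] at this
    exact this.congr (ae_of_all _ fun x => gumbel_cov x)
  refine ⟨hint, ?_⟩
  have hval := integral_image_eq_integral_abs_deriv_smul MeasurableSet.univ
    (fun x _ => gumbel_hderiv x) hinj (fun u => Real.exp (-u) * u ^ (-s))
  rw [gumbel_range, Measure.restrict_univ] at hval
  rw [← integral_congr_ae (ae_of_all _ fun x => gumbel_cov x), ← hval,
    Real.Gamma_eq_integral h1s]
  congr 1
  ext u
  rw [show 1 - s - 1 = -s by ring]
def gumbelM : Measure ℝ := volume.withDensity fun x => ENNReal.ofReal (Real.exp (-x - Real.exp (-x)))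

lemma gumbel_dens_meas : Measurable fun x : ℝ => (Real.exp (-x - Real.exp (-x))).toNNReal :=
  (Continuous.measurable (by continuity)).real_toNNReal

lemma gumbelM_eq : gumbelM
    = volume.withDensity fun x => (((Real.exp (-x - Real.exp (-x))).toNNReal : NNReal) : ENNReal) :=
  rfl

lemma mgf_gumbel {Ω : Type*} [MeasurableSpace Ω] (μ : Measure Ω) [IsProbabilityMeasure μ]
    {ε : Ω → ℝ} (hm : Measurable ε)
    (hcdf : ∀ x, μ {ω | ε ω ≤ x} = ENNReal.ofReal (Real.exp (-Real.exp (-x))))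
    {s : ℝ} (hs0 : 0 < s) (hs1 : s < 1) :
    Integrable (fun ω => Real.exp (s * ε ω)) μ ∧
      ∫ ω, Real.exp (s * ε ω) ∂μ = Real.Gamma (1 - s) := by
  haveI : IsProbabilityMeasure (μ.map ε) := Measure.isProbabilityMeasure_map hm.aemeasurable
  have hmap : μ.map ε = gumbelM := by
    refine Measure.ext_of_Iic _ _ fun a => ?_
    rw [Measure.map_apply hm measurableSet_Iic]
    exact (hcdf a).trans (gumbel_Iic a).symm
  have hcoe : ∀ x : ℝ, ((Real.exp (-x - Real.exp (-x))).toNNReal : ℝ)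
      = Real.exp (-x - Real.exp (-x)) := fun x => Real.coe_toNNReal _ (Real.exp_pos _).le
  have hIg : Integrable (fun x => Real.exp (s * x)) gumbelM := by
    rw [gumbelM_eq, integrable_withDensity_iff_integrable_smul gumbel_dens_meas]
    refine (gumbel_mgf_vol hs0 hs1).1.congr (ae_of_all _ fun x => ?_)
    simp only [NNReal.smul_def, hcoe, smul_eq_mul]
  have hVg : ∫ x, Real.exp (s * x) ∂gumbelM = Real.Gamma (1 - s) := by
    rw [gumbelM_eq, integral_withDensity_eq_integral_smul gumbel_dens_meas]
    rw [← (gumbel_mgf_vol hs0 hs1).2]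
    refine integral_congr_ae (ae_of_all _ fun x => ?_)
    simp only [NNReal.smul_def, hcoe, smul_eq_mul]
  have hsm : AEStronglyMeasurable (fun x => Real.exp (s * x)) (μ.map ε) :=
    (Continuous.aestronglyMeasurable (by continuity))
  constructor
  · have := (integrable_map_measure hsm hm.aemeasurable).1 (hmap ▸ hIg)
    exact this
  · have := integral_map hm.aemeasurable hsm
    rw [hmap, hVg] at this
    exact this.symm

lemma Zpos {Ω : Type*} [MeasurableSpace Ω] (μ : Measure Ω) [IsProbabilityMeasure μ]
    {Z : Ω → ℝ} {l : ℝ} (hl0 : 0 < l) (hZ : IsPosStable μ Z l) :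
    ∀ᵐ ω ∂μ, 0 < Z ω := by
  obtain ⟨hZm, hZ0, hLap⟩ := hZ
  have hmeas : MeasurableSet {ω | Z ω = 0} := hZm (measurableSet_singleton 0)
  have key : ∀ n : ℕ, (μ {ω | Z ω = 0}).toReal ≤ Real.exp (-(n:ℝ)^l) := by
    intro n
    rw [← hLap n (Nat.cast_nonneg n), ← measureReal_def, ← integral_indicator_one hmeas]
    apply integral_mono
    · exact (integrable_const (1:ℝ)).indicator hmeas
    · apply Integrable.mono' (integrable_const (1:ℝ))
      · exact (Real.measurable_exp.comp (measurable_const.mul hZm)).aestronglyMeasurable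
      · refine ae_of_all _ fun ω => ?_
        rw [Real.norm_eq_abs, abs_of_pos (Real.exp_pos _)]
        refine Real.exp_le_one_iff.2 ?_
        have := hZ0 ω
        have hn : (0:ℝ) ≤ (n:ℝ) := Nat.cast_nonneg n
        nlinarith
    · intro ω
      rcases eq_or_ne (Z ω) 0 with h | h
      · rw [Set.indicator_of_mem (show ω ∈ {ω | Z ω = 0} from h) (1 : Ω → ℝ)]
        simp [h]
      · rw [Set.indicator_of_notMem (show ω ∉ {ω | Z ω = 0} from h) (1 : Ω → ℝ)]
        positivity
  have htend : Tendsto (fun n : ℕ => Real.exp (-(n:ℝ)^l)) atTop (nhds 0) := by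
    apply Real.tendsto_exp_atBot.comp
    apply tendsto_neg_atTop_atBot.comp
    exact (tendsto_rpow_atTop hl0).comp tendsto_natCast_atTop_atTop
  have hle : (μ {ω | Z ω = 0}).toReal ≤ 0 := ge_of_tendsto' htend key
  have h0 : μ {ω | Z ω = 0} = 0 := by
    have h1 : (μ {ω | Z ω = 0}).toReal = 0 := le_antisymm hle ENNReal.toReal_nonneg
    exact (ENNReal.toReal_eq_zero_iff _).1 h1 |>.resolve_right (measure_ne_top μ _)
  rw [ae_iff]
  refine measure_mono_null (fun ω h => ?_) h0
  exact le_antisymm (not_lt.1 h) (hZ0 ω)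

lemma cdfW {Ω : Type*} [MeasurableSpace Ω] (μ : Measure Ω) [IsProbabilityMeasure μ]
    {ε Z : Ω → ℝ} {l : ℝ} (hl0 : 0 < l)
    (hεm : Measurable ε)
    (hcdf : ∀ x, μ {ω | ε ω ≤ x} = ENNReal.ofReal (Real.exp (-Real.exp (-x))))
    (hZ : IsPosStable μ Z l)
    (hind : IndepFun Z ε μ) (x : ℝ) :
    μ {ω | l * (ε ω + Real.log (Z ω)) ≤ x} = ENNReal.ofReal (Real.exp (-Real.exp (-x))) := by
  obtain ⟨hZm, hZ0, hLap⟩ := hZ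
  set c := x / l with hc
  have hx : x = l * c := by rw [hc, mul_div_assoc']; exact (mul_div_cancel_left₀ x hl0.ne').symm
  have hset : {ω | l * (ε ω + Real.log (Z ω)) ≤ x}
      = (fun ω => (Z ω, ε ω)) ⁻¹' {p : ℝ × ℝ | p.2 ≤ c - Real.log p.1} := by
    ext ω
    simp only [Set.mem_setOf_eq, Set.mem_preimage]
    rw [hx, mul_le_mul_iff_right₀ hl0, ← le_sub_iff_add_le]
  have hS : MeasurableSet {p : ℝ × ℝ | p.2 ≤ c - Real.log p.1} :=
    measurableSet_le measurable_snd (measurable_const.sub (Real.measurable_log.comp measurable_fst))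
  have hmap : μ.map (fun ω => (Z ω, ε ω)) = (μ.map Z).prod (μ.map ε) :=
    (indepFun_iff_map_prod_eq_prod_map_map hZm.aemeasurable hεm.aemeasurable).mp hind
  rw [hset, ← Measure.map_apply (hZm.prodMk hεm) hS, hmap, Measure.prod_apply hS]
  have hsec : ∀ z : ℝ, (μ.map ε) (Prod.mk z ⁻¹' {p : ℝ × ℝ | p.2 ≤ c - Real.log p.1})
      = ENNReal.ofReal (Real.exp (-Real.exp (-(c - Real.log z)))) := by
    intro z
    have h1 : Prod.mk z ⁻¹' {p : ℝ × ℝ | p.2 ≤ c - Real.log p.1} = Iic (c - Real.log z) := rfl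
    rw [h1, Measure.map_apply hεm measurableSet_Iic]
    exact hcdf _
  rw [lintegral_congr hsec]
  have hZpos : ∀ᵐ z ∂(μ.map Z), 0 < z :=
    (ae_map_iff hZm.aemeasurable measurableSet_Ioi).2 (Zpos μ hl0 ⟨hZm, hZ0, hLap⟩)
  have hae : (fun z => ENNReal.ofReal (Real.exp (-Real.exp (-(c - Real.log z)))))
      =ᵐ[μ.map Z] fun z => ENNReal.ofReal (Real.exp (-(Real.exp (-c) * z))) := by
    filter_upwards [hZpos] with z hz
    have h2 : -Real.exp (-(c - Real.log z)) = -(Real.exp (-c) * z) := by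
      rw [neg_sub, Real.exp_sub, Real.exp_log hz, Real.exp_neg]
      ring
    rw [h2]
  rw [lintegral_congr_ae hae]
  have hcont : Continuous fun z : ℝ => Real.exp (-(Real.exp (-c) * z)) :=
    Real.continuous_exp.comp ((continuous_const.mul continuous_id).neg)
  have hInt : Integrable (fun z => Real.exp (-(Real.exp (-c) * z))) (μ.map Z) := by
    apply Integrable.mono' (integrable_const (1:ℝ))
    · exact hcont.aestronglyMeasurable
    · filter_upwards [hZpos] with z hz
      rw [Real.norm_eq_abs, abs_of_pos (Real.exp_pos _)]
      refine Real.exp_le_one_iff.2 ?_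
      have := (Real.exp_pos (-c)).le
      nlinarith
  rw [← ofReal_integral_eq_lintegral_ofReal hInt (ae_of_all _ fun z => (Real.exp_pos _).le),
    integral_map hZm.aemeasurable hcont.aestronglyMeasurable]
  have hL := hLap (Real.exp (-c)) (Real.exp_pos _).le
  simp only [neg_mul] at hL
  rw [hL, ← Real.exp_mul, show -c * l = -x by rw [hx]; ring]

/-- Cross moment of two Fréchet variables coupled by a Gumbel copula: with
`δᵢ = exp ((l/α)(εᵢ + log Z))`, `E[δ₁ δ₂] = Γ(1 - l/α)² Γ(1 - 2/α) / Γ(1 - 2l/α)`. -/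
theorem stmt_17 {Ω : Type*} [MeasurableSpace Ω] (μ : Measure Ω) [IsProbabilityMeasure μ]
    (α l : ℝ) (hα : 2 < α) (hl : l ∈ Set.Ioo (0 : ℝ) 1)
    (ε₁ ε₂ Z : Ω → ℝ)
    (hε₁ : IsStdGumbel μ ε₁) (hε₂ : IsStdGumbel μ ε₂) (hZ : IsPosStable μ Z l)
    (hindep : iIndepFun ![ε₁, ε₂, Z] μ) :
    Integrable (fun ω => Real.exp (l / α * (ε₁ ω + Real.log (Z ω)))
        * Real.exp (l / α * (ε₂ ω + Real.log (Z ω)))) μ ∧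
    ∫ ω, Real.exp (l / α * (ε₁ ω + Real.log (Z ω)))
        * Real.exp (l / α * (ε₂ ω + Real.log (Z ω))) ∂μ
      = Real.Gamma (1 - l / α) ^ 2 * Real.Gamma (1 - 2 / α) / Real.Gamma (1 - 2 * l / α) := by
  obtain ⟨hl0, hl1⟩ := hl
  have hα0 : (0:ℝ) < α := by linarith
  obtain ⟨hε₁m, hcdf₁⟩ := hε₁
  obtain ⟨hε₂m, hcdf₂⟩ := hε₂
  have hZm : Measurable Z := hZ.1
  set s : ℝ := l / α with hs
  have hs0 : 0 < s := div_pos hl0 hα0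
  have hs12 : s < 1/2 := by
    rw [hs, div_lt_iff₀ hα0]
    nlinarith
  -- independence facts
  have hmeas : ∀ i, Measurable (![ε₁, ε₂, Z] i) := by
    intro i; fin_cases i <;> simpa using ‹_›
  have hZε₁ : IndepFun Z ε₁ μ := by
    have := hindep.indepFun (show (2:Fin 3) ≠ 0 by decide)
    simpa using this
  have hε₂Z : IndepFun ε₂ Z μ := by
    have := hindep.indepFun (show (1:Fin 3) ≠ 2 by decide)
    simpa using this
  have hpair : IndepFun ε₁ (fun ω => (ε₂ ω, Z ω)) μ := by
    have := hindep.indepFun_prodMk hmeas 1 2 0 (by decide) (by decide)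
    simpa using this.symm
  -- MGFs of the Gumbel variables
  have E1 := mgf_gumbel μ hε₁m hcdf₁ hs0 (by linarith)
  have E2 := mgf_gumbel μ hε₂m hcdf₂ hs0 (by linarith)
  have E1' := mgf_gumbel μ hε₁m hcdf₁ (s := 2*s) (by linarith) (by linarith)
  -- the variable W = l (ε₁ + log Z) is standard Gumbel
  set W : Ω → ℝ := fun ω => l * (ε₁ ω + Real.log (Z ω)) with hWdef
  have hWm : Measurable W := measurable_const.mul (hε₁m.add (Real.measurable_log.comp hZm))
  have hcdfW : ∀ x, μ {ω | W ω ≤ x} = ENNReal.ofReal (Real.exp (-Real.exp (-x))) :=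
    cdfW μ hl0 hε₁m hcdf₁ hZ hZε₁
  have h2α0 : (0:ℝ) < 2/α := by positivity
  have h2α1 : 2/α < 1 := by rw [div_lt_one hα0]; linarith
  have EW := mgf_gumbel μ hWm hcdfW h2α0 h2α1
  set V : Ω → ℝ := fun ω => Real.exp (2*s*Real.log (Z ω)) with hVdef
  have hVm : Measurable V :=
    Real.measurable_exp.comp (measurable_const.mul (Real.measurable_log.comp hZm))
  have hWfun : (fun ω => Real.exp (2/α * W ω))
      = fun ω => Real.exp (2*s*ε₁ ω) * V ω := by
    funext ω
    simp only [hVdef, hWdef, ← Real.exp_add]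
    congr 1
    rw [hs]
    field_simp
  rw [hWfun] at EW
  obtain ⟨EWi, EWv⟩ := EW
  -- independence of exp(2s ε₁) and V
  have hIndE1V : IndepFun (fun ω => Real.exp (2*s*ε₁ ω)) V μ :=
    hZε₁.symm.comp (Real.measurable_exp.comp (measurable_const.mul measurable_id))
      (Real.measurable_exp.comp (measurable_const.mul Real.measurable_log))
  haveI : (MeasureTheory.ae μ).NeBot := ae_neBot.2 (IsProbabilityMeasure.ne_zero μ)
  have hne : ¬ (fun ω => Real.exp (2*s*ε₁ ω)) =ᵐ[μ] 0 := by
    intro h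
    obtain ⟨ω, hω⟩ := h.exists
    exact absurd hω (by simp [(Real.exp_pos _).ne'])
  have hVint : Integrable V μ :=
    hIndE1V.integrable_right_of_integrable_op (· * ·) 1 one_ne_zero (fun x y => by simp [enorm_mul]) EWi
      (Real.measurable_exp.comp (measurable_const.mul hε₁m)).aestronglyMeasurable
      hVm.aestronglyMeasurable hne
  have hG2s : Real.Gamma (1 - 2*s) ≠ 0 :=
    (Real.Gamma_pos_of_pos (by linarith)).ne'
  have hVval : ∫ ω, V ω ∂μ = Real.Gamma (1 - 2/α) / Real.Gamma (1 - 2*s) := by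
    have hmul := hIndE1V.integral_mul_eq_mul_integral E1'.1.aestronglyMeasurable hVint.aestronglyMeasurable
    have hlhs : integral μ ((fun ω => Real.exp (2*s*ε₁ ω)) * V) = Real.Gamma (1 - 2/α) := by
      rw [show (fun ω => Real.exp (2*s*ε₁ ω)) * V = fun ω => Real.exp (2*s*ε₁ ω) * V ω from rfl]
      exact EWv
    rw [hlhs, E1'.2] at hmul
    field_simp at hmul ⊢
    linarith [hmul]
  -- the pair exp(s ε₂) * V
  have hIndE2V : IndepFun (fun ω => Real.exp (s*ε₂ ω)) V μ :=
    hε₂Z.comp (Real.measurable_exp.comp (measurable_const.mul measurable_id))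
      (Real.measurable_exp.comp (measurable_const.mul Real.measurable_log))
  have hTint : Integrable (fun ω => Real.exp (s*ε₂ ω) * V ω) μ :=
    hIndE2V.integrable_mul E2.1 hVint
  have hTval : ∫ ω, Real.exp (s*ε₂ ω) * V ω ∂μ
      = Real.Gamma (1 - s) * (Real.Gamma (1 - 2/α) / Real.Gamma (1 - 2*s)) := by
    have hmul := hIndE2V.integral_mul_eq_mul_integral E2.1.aestronglyMeasurable hVint.aestronglyMeasurable
    rw [E2.2, hVval] at hmul
    exact hmul
  -- final factorization
  have hIndFinal : IndepFun (fun ω => Real.exp (s*ε₁ ω)) (fun ω => Real.exp (s*ε₂ ω) * V ω) μ :=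
    hpair.comp (Real.measurable_exp.comp (measurable_const.mul measurable_id))
      ((Real.measurable_exp.comp (measurable_const.mul measurable_fst)).mul
        (Real.measurable_exp.comp (measurable_const.mul (Real.measurable_log.comp measurable_snd))))
  have hfinal_eq : (fun ω => Real.exp (s * (ε₁ ω + Real.log (Z ω)))
        * Real.exp (s * (ε₂ ω + Real.log (Z ω))))
      = fun ω => Real.exp (s*ε₁ ω) * (Real.exp (s*ε₂ ω) * V ω) := by
    funext ω
    simp only [hVdef, ← Real.exp_add]
    congr 1
    ring
  have hFint : Integrable (fun ω => Real.exp (s*ε₁ ω) * (Real.exp (s*ε₂ ω) * V ω)) μ :=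
    hIndFinal.integrable_mul E1.1 hTint
  have hFval : ∫ ω, Real.exp (s*ε₁ ω) * (Real.exp (s*ε₂ ω) * V ω) ∂μ
      = Real.Gamma (1 - s) * (Real.Gamma (1 - s) * (Real.Gamma (1 - 2/α) / Real.Gamma (1 - 2*s))) := by
    have hmul := hIndFinal.integral_mul_eq_mul_integral E1.1.aestronglyMeasurable hTint.aestronglyMeasurable
    rw [E1.2, hTval] at hmul
    exact hmul
  have h2s : 1 - 2*s = 1 - 2*l/α := by rw [hs]; ring
  constructor
  · rw [hfinal_eq]; exact hFint
  · rw [hfinal_eq, hFval, ← h2s]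
    ring
end
end

section
/- Let α > 2 and λ ∈ (0,1). Let ε₁, ε₂, Z be mutually independent random variables with ε₁, ε₂ standard Gumbel distributed and Z nonnegative and positive stable with parameter λ, and set δ₁ = exp((λ/α)(ε₁ + log Z)) and δ₂ = exp((λ/α)(ε₂ + log Z)) (so that δ₁ and δ₂ are Fréchet random variables with shape parameter α coupled by a Gumbel copula of parameter 1/λ). Then δ₁, δ₂ are square-integrable and their correlation coefficient equals [ Γ(1 − 2/α)·Γ(1 − λ/α)²/Γ(1 − 2λ/α) − Γ(1 − 1/α)² ] / [ Γ(1 − 2/α) − Γ(1 − 1/α)² ], where Γ is the Gamma function. -/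
open MeasureTheory ProbabilityTheory Real Set Filter

noncomputable section

/-- basic bound `1 - exp (-y) ≤ y`. -/
lemma one_sub_exp_neg_le (y : ℝ) : 1 - Real.exp (-y) ≤ y := by
  have := Real.add_one_le_exp (-y)
  linarith

lemma one_sub_exp_neg_nonneg {y : ℝ} (hy : 0 ≤ y) : 0 ≤ 1 - Real.exp (-y) := by
  have : Real.exp (-y) ≤ Real.exp 0 := Real.exp_le_exp.mpr (by linarith)
  simpa using this

lemma one_sub_exp_neg_le_one (y : ℝ) (hy : 0 ≤ y) : 1 - Real.exp (-y) ≤ 1 := by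
  have : 0 ≤ Real.exp (-y) := (Real.exp_pos _).le
  linarith

/-- generic integrability on `Ioi 0` by rpow-domination near `0` and at `∞`. -/
lemma integrableOn_Ioi_of_rpow_bounds {f : ℝ → ℝ} {a b C : ℝ}
    (hm : AEStronglyMeasurable f (volume.restrict (Ioi 0)))
    (ha : -1 < a) (hb : b < -1) (hC : 0 ≤ C)
    (h1 : ∀ t ∈ Ioc (0:ℝ) 1, |f t| ≤ C * t ^ a)
    (h2 : ∀ t ∈ Ioi (1:ℝ), |f t| ≤ t ^ b) :
    IntegrableOn f (Ioi (0:ℝ)) := by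
  have hsplit : Ioc (0:ℝ) 1 ∪ Ioi 1 = Ioi 0 := Ioc_union_Ioi_eq_Ioi zero_le_one
  rw [← hsplit, integrableOn_union]
  constructor
  · have hdom : IntegrableOn (fun t : ℝ => C * t ^ a) (Ioc (0:ℝ) 1) := by
      have h : IntervalIntegrable (fun x : ℝ => x ^ a) volume 0 1 :=
        intervalIntegral.intervalIntegrable_rpow' ha
      rw [intervalIntegrable_iff_integrableOn_Ioc_of_le zero_le_one] at h
      exact h.const_mul C
    refine Integrable.mono' hdom (hm.mono_set (by rw [← hsplit]; exact subset_union_left)) ?_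
    exact (ae_restrict_iff' measurableSet_Ioc).2 (ae_of_all _ (fun t ht => by
      simpa using h1 t ht))
  · have hdom : IntegrableOn (fun t : ℝ => t ^ b) (Ioi (1:ℝ)) :=
      integrableOn_Ioi_rpow_of_lt hb one_pos
    refine Integrable.mono' hdom (hm.mono_set (by rw [← hsplit]; exact subset_union_right)) ?_
    exact (ae_restrict_iff' measurableSet_Ioi).2 (ae_of_all _ (fun t ht => by
      simpa using h2 t ht))

lemma aux_meas (p x : ℝ) :
    Measurable (fun t : ℝ => (1 - Real.exp (-(t * x))) * t ^ (-p - 1)) := by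
  fun_prop

/-- Integrability of `(1 - exp (-(t*x))) * t^(-p-1)` on `Ioi 0`. -/
lemma aux_integrableOn (p x : ℝ) (hp0 : 0 < p) (hp1 : p < 1) (hx : 0 ≤ x) :
    IntegrableOn (fun t : ℝ => (1 - Real.exp (-(t * x))) * t ^ (-p - 1)) (Ioi (0:ℝ)) := by
  rcases eq_or_lt_of_le hx with rfl | hx'
  · refine (integrable_zero _ _ _).congr (ae_of_all _ fun t => ?_)
    simp
  refine integrableOn_Ioi_of_rpow_bounds (aux_meas p x).aestronglyMeasurable
    (a := -p) (b := -p - 1) (by linarith) (by linarith) hx ?_ ?_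
  · intro t ht
    have ht0 : 0 < t := ht.1
    have htx : 0 ≤ t * x := mul_nonneg ht0.le hx
    have h1 : 0 ≤ 1 - Real.exp (-(t * x)) := one_sub_exp_neg_nonneg htx
    have h2 : 1 - Real.exp (-(t * x)) ≤ t * x := one_sub_exp_neg_le _
    have h3 : (0:ℝ) ≤ t ^ (-p - 1) := Real.rpow_nonneg ht0.le _
    rw [abs_of_nonneg (mul_nonneg h1 h3)]
    calc (1 - Real.exp (-(t * x))) * t ^ (-p - 1) ≤ (t * x) * t ^ (-p - 1) := by
          exact mul_le_mul_of_nonneg_right h2 h3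
      _ = x * (t ^ (1:ℝ) * t ^ (-p - 1)) := by rw [Real.rpow_one]; ring
      _ = x * t ^ (-p) := by
          rw [← Real.rpow_add ht0]; norm_num
  · intro t ht
    have ht1 : (1:ℝ) < t := ht
    have ht0 : 0 < t := lt_trans one_pos ht1
    have htx : 0 ≤ t * x := mul_nonneg ht0.le hx
    have h1 : 0 ≤ 1 - Real.exp (-(t * x)) := one_sub_exp_neg_nonneg htx
    have h2 : 1 - Real.exp (-(t * x)) ≤ 1 := one_sub_exp_neg_le_one _ htx
    have h3 : (0:ℝ) ≤ t ^ (-p - 1) := Real.rpow_nonneg ht0.le _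
    rw [abs_of_nonneg (mul_nonneg h1 h3)]
    nlinarith [h3]

/-- `∫_0^∞ (1 - e^{-u}) u^{-p-1} du = Γ(1-p)/p` for `0 < p < 1`. -/
lemma aux_J (p : ℝ) (hp0 : 0 < p) (hp1 : p < 1) :
    ∫ u in Ioi (0:ℝ), (1 - Real.exp (-u)) * u ^ (-p - 1)
      = Real.Gamma (1 - p) / p := by
  set F : ℝ → ℝ := fun u => (1 - Real.exp (-u)) * u ^ (-p)
  set F' : ℝ → ℝ := fun u =>
    Real.exp (-u) * u ^ (-p) - p * ((1 - Real.exp (-u)) * u ^ (-p - 1))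
  have hGint : IntegrableOn (fun u : ℝ => Real.exp (-u) * u ^ ((1 - p) - 1)) (Ioi 0) :=
    Real.GammaIntegral_convergent (by linarith)
  have hexp : ∀ u : ℝ, ((1:ℝ) - p) - 1 = -p := fun _ => by ring
  have hGint' : IntegrableOn (fun u : ℝ => Real.exp (-u) * u ^ (-p)) (Ioi 0) := by
    have := hGint; rw [show ((1:ℝ) - p) - 1 = -p by ring] at this; exact this
  have hJint : IntegrableOn (fun u : ℝ => (1 - Real.exp (-u)) * u ^ (-p - 1)) (Ioi 0) := by
    simpa using aux_integrableOn p 1 hp0 hp1 one_pos.le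
  have hF'int : IntegrableOn F' (Ioi 0) := hGint'.sub (hJint.const_mul p)
  have hderiv : ∀ u ∈ Ioi (0:ℝ), HasDerivAt F (F' u) u := by
    intro u hu
    have hu0 : (0:ℝ) < u := hu
    have h1 : HasDerivAt (fun u : ℝ => 1 - Real.exp (-u)) (Real.exp (-u)) u := by
      have : HasDerivAt (fun u : ℝ => Real.exp (-u)) (Real.exp (-u) * (-1)) u :=
        (Real.hasDerivAt_exp (-u)).comp u (hasDerivAt_neg u)
      simpa using this.const_sub 1
    have h2 : HasDerivAt (fun u : ℝ => u ^ (-p)) ((-p) * u ^ (-p - 1)) u :=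
      Real.hasDerivAt_rpow_const (Or.inl hu0.ne')
    have : HasDerivAt (fun u : ℝ => (1 - Real.exp (-u)) * u ^ (-p))
        (Real.exp (-u) * u ^ (-p) + (1 - Real.exp (-u)) * ((-p) * u ^ (-p - 1))) u := h1.mul h2
    convert this using 1
    show Real.exp (-u) * u ^ (-p) - p * ((1 - Real.exp (-u)) * u ^ (-p - 1)) = _
    ring
  have hcont : ContinuousWithinAt F (Ici 0) 0 := by
    rw [ContinuousWithinAt]
    have hF0 : F 0 = 0 := by
      simp [F, Real.zero_rpow (by linarith : -p ≠ 0)]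
    rw [hF0]
    have hup : Tendsto (fun u : ℝ => u ^ (1 - p)) (nhdsWithin 0 (Ici 0)) (nhds 0) := by
      have : ContinuousAt (fun u : ℝ => u ^ (1 - p)) 0 :=
        Real.continuousAt_rpow_const 0 (1 - p) (Or.inr (by linarith))
      have h0 : (0:ℝ) ^ (1 - p) = 0 := Real.zero_rpow (by linarith : (1:ℝ) - p ≠ 0)
      have h := this.continuousWithinAt (s := Ici (0:ℝ))
      rw [ContinuousWithinAt] at h
      simpa [h0] using h
    refine tendsto_of_tendsto_of_tendsto_of_le_of_le' tendsto_const_nhds hup ?_ ?_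
    · filter_upwards [self_mem_nhdsWithin] with u (hu : 0 ≤ u)
      exact mul_nonneg (one_sub_exp_neg_nonneg hu) (Real.rpow_nonneg hu _)
    · filter_upwards [self_mem_nhdsWithin] with u (hu : 0 ≤ u)
      rcases eq_or_lt_of_le hu with rfl | hu0
      · simp [F, Real.zero_rpow (by linarith : -p ≠ 0),
          Real.zero_rpow (by linarith : (1:ℝ) - p ≠ 0)]
      · calc (1 - Real.exp (-u)) * u ^ (-p) ≤ u * u ^ (-p) :=
              mul_le_mul_of_nonneg_right (one_sub_exp_neg_le u) (Real.rpow_nonneg hu _)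
          _ = u ^ (1:ℝ) * u ^ (-p) := by rw [Real.rpow_one]
          _ = u ^ (1 - p) := by rw [← Real.rpow_add hu0]; ring_nf
  have htop : Tendsto F atTop (nhds 0) := by
    have hup : Tendsto (fun u : ℝ => u ^ (-p)) atTop (nhds 0) := tendsto_rpow_neg_atTop hp0
    refine tendsto_of_tendsto_of_tendsto_of_le_of_le' tendsto_const_nhds hup ?_ ?_
    · filter_upwards [eventually_ge_atTop (0:ℝ)] with u hu
      exact mul_nonneg (one_sub_exp_neg_nonneg hu) (Real.rpow_nonneg hu _)
    · filter_upwards [eventually_ge_atTop (0:ℝ)] with u hu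
      have h1 := one_sub_exp_neg_le_one u hu
      have h2 : (0:ℝ) ≤ u ^ (-p) := Real.rpow_nonneg hu _
      calc F u = (1 - Real.exp (-u)) * u ^ (-p) := rfl
        _ ≤ 1 * u ^ (-p) := mul_le_mul_of_nonneg_right h1 h2
        _ = u ^ (-p) := one_mul _
  have key : ∫ u in Ioi (0:ℝ), F' u = 0 - F 0 :=
    integral_Ioi_of_hasDerivAt_of_tendsto hcont hderiv hF'int htop
  have hF0 : F 0 = 0 := by simp [F, Real.zero_rpow (by linarith : -p ≠ 0)]
  rw [hF0, sub_zero] at key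
  have hsplit : ∫ u in Ioi (0:ℝ), F' u
      = (∫ u in Ioi (0:ℝ), Real.exp (-u) * u ^ (-p))
        - p * ∫ u in Ioi (0:ℝ), (1 - Real.exp (-u)) * u ^ (-p - 1) := by
    rw [integral_sub hGint' (hJint.const_mul p), integral_const_mul]
  have hGamma : ∫ u in Ioi (0:ℝ), Real.exp (-u) * u ^ (-p) = Real.Gamma (1 - p) := by
    rw [Real.Gamma_eq_integral (by linarith : (0:ℝ) < 1 - p)]
    refine setIntegral_congr_fun measurableSet_Ioi (fun u hu => ?_)
    rw [show ((1:ℝ) - p) - 1 = -p by ring]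
  rw [hsplit, hGamma] at key
  field_simp
  linear_combination -key

/-- Frullani-type representation: `∫_0^∞ (1-e^{-tx}) t^{-p-1} dt = x^p Γ(1-p)/p` for `x ≥ 0`. -/
lemma aux_B (p x : ℝ) (hp0 : 0 < p) (hp1 : p < 1) (hx : 0 ≤ x) :
    ∫ t in Ioi (0:ℝ), (1 - Real.exp (-(t * x))) * t ^ (-p - 1)
      = x ^ p * (Real.Gamma (1 - p) / p) := by
  rcases eq_or_lt_of_le hx with rfl | hx'
  · simp [Real.zero_rpow hp0.ne']
  set g : ℝ → ℝ := fun u => (1 - Real.exp (-u)) * u ^ (-p - 1) with hg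
  have hsub : ∫ t in Ioi (0:ℝ), g (x * t) = x⁻¹ • ∫ u in Ioi (x * 0), g u :=
    integral_comp_mul_left_Ioi g 0 hx'
  have hpt : ∀ t ∈ Ioi (0:ℝ),
      (1 - Real.exp (-(t * x))) * t ^ (-p - 1) = x ^ (p + 1) * g (x * t) := by
    intro t ht
    have ht0 : (0:ℝ) < t := ht
    have hxt : (x * t) ^ (-p - 1) = x ^ (-p - 1) * t ^ (-p - 1) :=
      Real.mul_rpow hx ht0.le
    have hxx : x ^ (p + 1) * x ^ (-p - 1) = 1 := by
      rw [← Real.rpow_add hx']; norm_num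
    simp only [g, hxt, mul_comm t x]
    calc (1 - Real.exp (-(x * t))) * t ^ (-p - 1)
        = (x ^ (p+1) * x ^ (-p-1)) * ((1 - Real.exp (-(x * t))) * t ^ (-p - 1)) := by
          rw [hxx, one_mul]
      _ = x ^ (p + 1) * ((1 - Real.exp (-(x * t))) * (x ^ (-p - 1) * t ^ (-p - 1))) := by ring
  rw [setIntegral_congr_fun measurableSet_Ioi hpt, integral_const_mul, hsub]
  rw [mul_zero, aux_J p hp0 hp1]
  rw [smul_eq_mul, ← mul_assoc]
  congr 1
  rw [← Real.rpow_neg_one x, ← Real.rpow_add hx']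
  congr 1
  ring

/-- `∫_0^∞ (1-e^{-t^l}) t^{-p-1} dt = Γ(1-p/l)/p` for `0 < p < l`. -/
lemma aux_K (p l : ℝ) (hl0 : 0 < l) (hp0 : 0 < p) (hpl : p < l) (hl1 : l ≤ 1) :
    ∫ t in Ioi (0:ℝ), (1 - Real.exp (-t ^ l)) * t ^ (-p - 1)
      = Real.Gamma (1 - p / l) / p := by
  set g : ℝ → ℝ := fun t => (1 - Real.exp (-t ^ l)) * t ^ (-p - 1) with hg
  have hinv : (1:ℝ)/l ≠ 0 := by positivity
  have hsub := integral_comp_rpow_Ioi g hinv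
  have hpt : ∀ x ∈ Ioi (0:ℝ),
      (|1/l| * x ^ (1/l - 1)) • g (x ^ (1/l))
        = (1/l) * ((1 - Real.exp (-x)) * x ^ (-(p/l) - 1)) := by
    intro x hx
    have hx0 : (0:ℝ) < x := hx
    have h1 : (x ^ (1/l)) ^ l = x := by
      rw [← Real.rpow_mul hx0.le]
      rw [one_div_mul_cancel hl0.ne', Real.rpow_one]
    have h2 : (x ^ (1/l)) ^ (-p - 1) = x ^ ((-p-1)/l) := by
      rw [← Real.rpow_mul hx0.le]
      congr 1
      field_simp
    have h3 : x ^ (1/l - 1) * x ^ ((-p-1)/l) = x ^ (-(p/l) - 1) := by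
      rw [← Real.rpow_add hx0]
      congr 1
      field_simp
      ring
    simp only [g, h1, h2, smul_eq_mul, abs_of_pos (by positivity : (0:ℝ) < 1/l)]
    calc 1/l * x ^ (1/l - 1) * ((1 - Real.exp (-x)) * x ^ ((-p-1)/l))
        = 1/l * ((1 - Real.exp (-x)) * (x ^ (1/l - 1) * x ^ ((-p-1)/l))) := by ring
      _ = 1/l * ((1 - Real.exp (-x)) * x ^ (-(p/l) - 1)) := by rw [h3]
  rw [← hsub, setIntegral_congr_fun measurableSet_Ioi hpt, integral_const_mul]
  have hq0 : 0 < p / l := by positivity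
  have hq1 : p / l < 1 := (div_lt_one hl0).mpr hpl
  have := aux_J (p/l) hq0 hq1
  rw [this]
  field_simp

/-- `∫_0^∞ (1-e^{-t^{-1/s}}) dt = Γ(1-s)` for `0 < s < 1`, with integrability. -/
lemma aux_G_int (s : ℝ) (hs0 : 0 < s) (hs1 : s < 1) :
    IntegrableOn (fun t : ℝ => 1 - Real.exp (-t ^ (-(1/s)))) (Ioi (0:ℝ)) := by
  have hmeas : Measurable (fun t : ℝ => 1 - Real.exp (-t ^ (-(1/s)))) := by fun_prop
  refine integrableOn_Ioi_of_rpow_bounds hmeas.aestronglyMeasurable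
    (a := 0) (b := -(1/s)) (by norm_num) (by
      have : 1 < 1/s := (lt_div_iff₀ hs0).mpr (by linarith)
      linarith) zero_le_one ?_ ?_
  · intro t ht
    have ht0 : 0 < t := ht.1
    have h0 : 0 ≤ t ^ (-(1/s)) := Real.rpow_nonneg ht0.le _
    rw [abs_of_nonneg (one_sub_exp_neg_nonneg h0), Real.rpow_zero, mul_one]
    exact one_sub_exp_neg_le_one _ h0
  · intro t ht
    have ht0 : (0:ℝ) < t := lt_trans one_pos ht
    have h0 : 0 ≤ t ^ (-(1/s)) := Real.rpow_nonneg ht0.le _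
    rw [abs_of_nonneg (one_sub_exp_neg_nonneg h0)]
    exact one_sub_exp_neg_le _

lemma aux_G (s : ℝ) (hs0 : 0 < s) (hs1 : s < 1) :
    ∫ t in Ioi (0:ℝ), (1 - Real.exp (-t ^ (-(1/s)))) = Real.Gamma (1 - s) := by
  set g : ℝ → ℝ := fun t => 1 - Real.exp (-t ^ (-(1/s))) with hg
  have hsub := integral_comp_rpow_Ioi g (p := -s) (by simpa using hs0.ne')
  have hpt : ∀ x ∈ Ioi (0:ℝ),
      (|(-s)| * x ^ (-s - 1)) • g (x ^ (-s))
        = s * ((1 - Real.exp (-x)) * x ^ (-s - 1)) := by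
    intro x hx
    have hx0 : (0:ℝ) < x := hx
    have h1 : (x ^ (-s)) ^ (-(1/s)) = x := by
      rw [← Real.rpow_mul hx0.le]
      rw [show (-s) * (-(1/s)) = s * (1/s) by ring, mul_one_div_cancel hs0.ne', Real.rpow_one]
    simp only [g, h1, smul_eq_mul, abs_neg, abs_of_pos hs0]
    ring
  rw [← hsub, setIntegral_congr_fun measurableSet_Ioi hpt, integral_const_mul, aux_J s hs0 hs1]
  field_simp

lemma integral_of_lintegral {Ω : Type*} [MeasurableSpace Ω] {μ : Measure Ω} {f : Ω → ℝ} {r : ℝ}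
    (hm : AEStronglyMeasurable f μ) (hnn : 0 ≤ᵐ[μ] f) (hr : 0 ≤ r)
    (h : ∫⁻ ω, ENNReal.ofReal (f ω) ∂μ = ENNReal.ofReal r) :
    Integrable f μ ∧ ∫ ω, f ω ∂μ = r := by
  have hfi : Integrable f μ :=
    ⟨hm, (hasFiniteIntegral_iff_ofReal hnn).2 (by rw [h]; exact ENNReal.ofReal_lt_top)⟩
  refine ⟨hfi, ?_⟩
  rw [integral_eq_lintegral_of_nonneg_ae hnn hm, h, ENNReal.toReal_ofReal hr]

/-- The exponential moment of a standard Gumbel random variable. -/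
lemma gumbel_moment {Ω : Type*} [MeasurableSpace Ω] (μ : Measure Ω) [IsProbabilityMeasure μ]
    {ε : Ω → ℝ} (hε : IsStdGumbel μ ε) {s : ℝ} (hs0 : 0 < s) (hs1 : s < 1) :
    Integrable (fun ω => Real.exp (s * ε ω)) μ ∧
      ∫ ω, Real.exp (s * ε ω) ∂μ = Real.Gamma (1 - s) := by
  obtain ⟨hεm, hεcdf⟩ := hε
  set f : Ω → ℝ := fun ω => Real.exp (s * ε ω) with hf
  have hmeas : Measurable f := by fun_prop
  have hnn : ∀ ω, 0 ≤ f ω := fun ω => (Real.exp_pos _).le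
  have key : ∫⁻ ω, ENNReal.ofReal (f ω) ∂μ = ∫⁻ t in Ioi (0:ℝ), μ {a | t < f a} :=
    lintegral_eq_lintegral_meas_lt μ (ae_of_all _ hnn) hmeas.aemeasurable
  have hmeaseq : ∀ t ∈ Ioi (0:ℝ),
      μ {a | t < f a} = ENNReal.ofReal (1 - Real.exp (-t ^ (-(1/s)))) := by
    intro t ht
    have ht0 : (0:ℝ) < t := ht
    have hset : {a | t < f a} = {ω | ε ω ≤ Real.log t / s}ᶜ := by
      ext a
      simp only [Set.mem_setOf_eq, Set.mem_compl_iff, not_le, hf]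
      rw [← Real.log_lt_iff_lt_exp ht0, div_lt_iff₀' hs0]
    have hms : MeasurableSet {ω | ε ω ≤ Real.log t / s} := hεm measurableSet_Iic
    rw [hset, measure_compl hms (measure_ne_top μ _), hεcdf, measure_univ]
    have hrw : Real.exp (-(Real.log t / s)) = t ^ (-(1/s)) := by
      rw [Real.rpow_def_of_pos ht0]
      congr 1
      field_simp
    rw [← hrw]
    have hc0 : (0:ℝ) ≤ Real.exp (-Real.exp (-(Real.log t / s))) := (Real.exp_pos _).le
    rw [← ENNReal.ofReal_one, ← ENNReal.ofReal_sub _ hc0]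
  have key2 : ∫⁻ t in Ioi (0:ℝ), μ {a | t < f a}
      = ∫⁻ t in Ioi (0:ℝ), ENNReal.ofReal (1 - Real.exp (-t ^ (-(1/s)))) :=
    setLIntegral_congr_fun measurableSet_Ioi hmeaseq
  have key3 : ∫⁻ t in Ioi (0:ℝ), ENNReal.ofReal (1 - Real.exp (-t ^ (-(1/s))))
      = ENNReal.ofReal (Real.Gamma (1 - s)) := by
    rw [← ofReal_integral_eq_lintegral_ofReal (aux_G_int s hs0 hs1) ?_, aux_G s hs0 hs1]
    exact (ae_restrict_iff' measurableSet_Ioi).2 (ae_of_all _ fun t ht =>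
      one_sub_exp_neg_nonneg (Real.rpow_nonneg (le_of_lt ht) _))
  exact integral_of_lintegral hmeas.aestronglyMeasurable (ae_of_all _ hnn)
    (Real.Gamma_pos_of_pos (by linarith)).le (key.trans (key2.trans key3))

lemma aux_K_int (p l : ℝ) (hl0 : 0 < l) (hp0 : 0 < p) (hpl : p < l) (hl1 : l ≤ 1) :
    IntegrableOn (fun t : ℝ => (1 - Real.exp (-t ^ l)) * t ^ (-p - 1)) (Ioi (0:ℝ)) := by
  have hmeas : Measurable (fun t : ℝ => (1 - Real.exp (-t ^ l)) * t ^ (-p - 1)) := by fun_prop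
  refine integrableOn_Ioi_of_rpow_bounds hmeas.aestronglyMeasurable
    (a := l - p - 1) (b := -p - 1) (by linarith) (by linarith) zero_le_one ?_ ?_
  · intro t ht
    have ht0 : 0 < t := ht.1
    have h0 : 0 ≤ t ^ l := Real.rpow_nonneg ht0.le _
    have h3 : (0:ℝ) ≤ t ^ (-p - 1) := Real.rpow_nonneg ht0.le _
    rw [abs_of_nonneg (mul_nonneg (one_sub_exp_neg_nonneg h0) h3), one_mul]
    calc (1 - Real.exp (-t ^ l)) * t ^ (-p - 1) ≤ t ^ l * t ^ (-p - 1) :=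
          mul_le_mul_of_nonneg_right (one_sub_exp_neg_le _) h3
      _ = t ^ (l - p - 1) := by rw [← Real.rpow_add ht0]; ring_nf
  · intro t ht
    have ht0 : (0:ℝ) < t := lt_trans one_pos ht
    have h0 : 0 ≤ t ^ l := Real.rpow_nonneg ht0.le _
    have h3 : (0:ℝ) ≤ t ^ (-p - 1) := Real.rpow_nonneg ht0.le _
    rw [abs_of_nonneg (mul_nonneg (one_sub_exp_neg_nonneg h0) h3)]
    calc (1 - Real.exp (-t ^ l)) * t ^ (-p - 1) ≤ 1 * t ^ (-p - 1) :=
          mul_le_mul_of_nonneg_right (one_sub_exp_neg_le_one _ h0) h3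
      _ = t ^ (-p - 1) := one_mul _

/-- The `p`-th moment of a positive stable random variable, `0 < p < l`. -/
lemma stable_moment {Ω : Type*} [MeasurableSpace Ω] (μ : Measure Ω) [IsProbabilityMeasure μ]
    {Z : Ω → ℝ} {l : ℝ} (hZ : IsPosStable μ Z l) (hl0 : 0 < l) (hl1 : l ≤ 1)
    {p : ℝ} (hp0 : 0 < p) (hpl : p < l) :
    Integrable (fun ω => Z ω ^ p) μ ∧
      ∫ ω, Z ω ^ p ∂μ = Real.Gamma (1 - p / l) / Real.Gamma (1 - p) := by
  obtain ⟨hZm, hZnn, hZlap⟩ := hZ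
  have hp1 : p < 1 := lt_of_lt_of_le hpl hl1
  have hΓp : 0 < Real.Gamma (1 - p) := Real.Gamma_pos_of_pos (by linarith)
  set c : ℝ := p / Real.Gamma (1 - p) with hc
  have hc0 : 0 < c := by positivity
  have hmeas : Measurable (fun ω => Z ω ^ p) := by fun_prop
  have hnn : ∀ ω, 0 ≤ Z ω ^ p := fun ω => Real.rpow_nonneg (hZnn ω) _
  -- pointwise Frullani representation
  have hpt : ∀ ω, Z ω ^ p
      = c * ∫ t in Ioi (0:ℝ), (1 - Real.exp (-(t * Z ω))) * t ^ (-p - 1) := by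
    intro ω
    rw [aux_B p (Z ω) hp0 hp1 (hZnn ω), hc]
    field_simp
  -- lintegral computation
  have key : ∫⁻ ω, ENNReal.ofReal (Z ω ^ p) ∂μ
      = ENNReal.ofReal c * ∫⁻ ω, (∫⁻ t in Ioi (0:ℝ),
          ENNReal.ofReal ((1 - Real.exp (-(t * Z ω))) * t ^ (-p - 1))) ∂μ := by
    rw [← lintegral_const_mul' _ _ ENNReal.ofReal_ne_top]
    refine lintegral_congr fun ω => ?_
    rw [hpt ω, ENNReal.ofReal_mul hc0.le]
    congr 1
    rw [← ofReal_integral_eq_lintegral_ofReal (aux_integrableOn p (Z ω) hp0 hp1 (hZnn ω)) ?_]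
    exact (ae_restrict_iff' measurableSet_Ioi).2 (ae_of_all _ fun t ht =>
      mul_nonneg (one_sub_exp_neg_nonneg (mul_nonneg (le_of_lt ht) (hZnn ω)))
        (Real.rpow_nonneg (le_of_lt ht) _))
  -- swap the two integrals (Tonelli)
  have hswap : ∫⁻ ω, (∫⁻ t in Ioi (0:ℝ),
        ENNReal.ofReal ((1 - Real.exp (-(t * Z ω))) * t ^ (-p - 1))) ∂μ
      = ∫⁻ t in Ioi (0:ℝ), (∫⁻ ω,
          ENNReal.ofReal ((1 - Real.exp (-(t * Z ω))) * t ^ (-p - 1)) ∂μ) := by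
    apply lintegral_lintegral_swap
    apply Measurable.aemeasurable
    apply ENNReal.measurable_ofReal.comp
    apply Measurable.mul
    · exact (measurable_const.sub (Real.measurable_exp.comp
        ((measurable_snd.mul (hZm.comp measurable_fst)).neg)))
    · fun_prop
  -- inner integral via the Laplace transform
  have hinner : ∀ t ∈ Ioi (0:ℝ),
      ∫⁻ ω, ENNReal.ofReal ((1 - Real.exp (-(t * Z ω))) * t ^ (-p - 1)) ∂μ
        = ENNReal.ofReal ((1 - Real.exp (-t ^ l)) * t ^ (-p - 1)) := by
    intro t ht
    have ht0 : (0:ℝ) < t := ht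
    have hbexp : Integrable (fun ω => Real.exp (-(t * Z ω))) μ := by
      refine (integrable_const (1:ℝ)).mono'
        ((Real.measurable_exp.comp ((measurable_const.mul hZm).neg)).aestronglyMeasurable)
        (ae_of_all _ fun ω => ?_)
      rw [Real.norm_eq_abs, abs_of_nonneg (Real.exp_pos _).le]
      exact Real.exp_le_one_iff.mpr (by
        have := mul_nonneg ht0.le (hZnn ω); linarith)
    have hbint : Integrable (fun ω => (1 - Real.exp (-(t * Z ω))) * t ^ (-p - 1)) μ :=
      ((integrable_const (1:ℝ)).sub hbexp).mul_const _
    rw [← ofReal_integral_eq_lintegral_ofReal hbint (ae_of_all _ fun ω =>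
      mul_nonneg (one_sub_exp_neg_nonneg (mul_nonneg ht0.le (hZnn ω)))
        (Real.rpow_nonneg ht0.le _))]
    congr 1
    rw [integral_mul_const]
    congr 1
    rw [integral_sub (integrable_const (1:ℝ)) hbexp]
    have hlap := hZlap t ht0.le
    simp only [neg_mul] at hlap
    rw [integral_const, probReal_univ, smul_eq_mul, mul_one, hlap]
  have key2 : ∫⁻ t in Ioi (0:ℝ), (∫⁻ ω,
        ENNReal.ofReal ((1 - Real.exp (-(t * Z ω))) * t ^ (-p - 1)) ∂μ)
      = ENNReal.ofReal (Real.Gamma (1 - p / l) / p) := by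
    rw [setLIntegral_congr_fun measurableSet_Ioi hinner,
      ← ofReal_integral_eq_lintegral_ofReal (aux_K_int p l hl0 hp0 hpl hl1) ?_,
      aux_K p l hl0 hp0 hpl hl1]
    exact (ae_restrict_iff' measurableSet_Ioi).2 (ae_of_all _ fun t ht =>
      mul_nonneg (one_sub_exp_neg_nonneg (Real.rpow_nonneg (le_of_lt ht) _))
        (Real.rpow_nonneg (le_of_lt ht) _))
  have hfinal : ∫⁻ ω, ENNReal.ofReal (Z ω ^ p) ∂μ
      = ENNReal.ofReal (Real.Gamma (1 - p / l) / Real.Gamma (1 - p)) := by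
    rw [key, hswap, key2, ← ENNReal.ofReal_mul hc0.le]
    congr 1
    rw [hc]
    field_simp
  have hΓq : 0 < Real.Gamma (1 - p / l) := by
    apply Real.Gamma_pos_of_pos
    have : p / l < 1 := (div_lt_one hl0).mpr hpl
    linarith
  exact integral_of_lintegral hmeas.aestronglyMeasurable (ae_of_all _ hnn)
    (by positivity) hfinal

/-- A positive stable random variable is a.e. positive. -/
lemma stable_pos {Ω : Type*} [MeasurableSpace Ω] (μ : Measure Ω) [IsProbabilityMeasure μ]
    {Z : Ω → ℝ} {l : ℝ} (hZ : IsPosStable μ Z l) (hl0 : 0 < l) :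
    ∀ᵐ ω ∂μ, 0 < Z ω := by
  obtain ⟨hZm, hZnn, hZlap⟩ := hZ
  have hS : MeasurableSet {ω | Z ω = 0} := hZm (measurableSet_singleton 0)
  have hkey : ∀ n : ℕ, (μ {ω | Z ω = 0}).toReal ≤ Real.exp (-(n:ℝ) ^ l) := by
    intro n
    have hbexp : Integrable (fun ω => Real.exp (-(n:ℝ) * Z ω)) μ := by
      refine (integrable_const (1:ℝ)).mono'
        ((Real.measurable_exp.comp ((measurable_const.mul hZm))).aestronglyMeasurable)
        (ae_of_all _ fun ω => ?_)
      rw [Real.norm_eq_abs, abs_of_nonneg (Real.exp_pos _).le]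
      refine Real.exp_le_one_iff.mpr ?_
      have := mul_nonneg (Nat.cast_nonneg (α := ℝ) n) (hZnn ω)
      nlinarith
    have h1 : (μ {ω | Z ω = 0}).toReal
        = ∫ ω in {ω | Z ω = 0}, Real.exp (-(n:ℝ) * Z ω) ∂μ := by
      rw [setIntegral_congr_fun hS (g := fun _ => (1:ℝ)) (fun ω hω => by
        simp only [Set.mem_setOf_eq] at hω
        simp [hω])]
      simp
      rfl
    rw [h1, ← hZlap n (Nat.cast_nonneg n)]
    exact setIntegral_le_integral hbexp (ae_of_all _ fun ω => (Real.exp_pos _).le)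
  have hlim : Tendsto (fun n : ℕ => Real.exp (-(n:ℝ) ^ l)) atTop (nhds 0) := by
    apply Real.tendsto_exp_atBot.comp
    apply Filter.tendsto_neg_atBot_iff.mpr
    exact (tendsto_rpow_atTop hl0).comp tendsto_natCast_atTop_atTop
  have hle : (μ {ω | Z ω = 0}).toReal ≤ 0 := ge_of_tendsto hlim (Eventually.of_forall hkey)
  have h0 : μ {ω | Z ω = 0} = 0 := by
    have := ENNReal.toReal_nonneg (a := μ {ω | Z ω = 0})
    have heq : (μ {ω | Z ω = 0}).toReal = 0 := le_antisymm hle this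
    rcases (ENNReal.toReal_eq_zero_iff _).mp heq with h | h
    · exact h
    · exact absurd h (measure_ne_top μ _)
  have : ∀ᵐ ω ∂μ, ¬ Z ω = 0 := by
    rw [ae_iff]; simpa using h0
  filter_upwards [this] with ω hω
  exact lt_of_le_of_ne (hZnn ω) (Ne.symm hω)

lemma ae_delta_eq {Ω : Type*} [MeasurableSpace Ω] {μ : Measure Ω} {Z : Ω → ℝ}
    (hpos : ∀ᵐ ω ∂μ, 0 < Z ω) (ε : Ω → ℝ) (c : ℝ) :
    (fun ω => Real.exp (c * (ε ω + Real.log (Z ω))))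
      =ᵐ[μ] fun ω => Real.exp (c * ε ω) * Z ω ^ c := by
  filter_upwards [hpos] with ω hω
  rw [mul_add, Real.exp_add, Real.rpow_def_of_pos hω, mul_comm (Real.log (Z ω)) c]

/-- Moments of `δ = exp ((l/α)(ε + log Z))` for independent Gumbel `ε` and stable `Z`. -/
lemma delta_facts {Ω : Type*} [MeasurableSpace Ω] (μ : Measure Ω) [IsProbabilityMeasure μ]
    {ε Z : Ω → ℝ} {l α : ℝ} (hα : 2 < α) (hl : l ∈ Set.Ioo (0 : ℝ) 1)
    (hε : IsStdGumbel μ ε) (hZ : IsPosStable μ Z l) (hind : IndepFun ε Z μ) :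
    MemLp (fun ω => Real.exp (l / α * (ε ω + Real.log (Z ω)))) 2 μ ∧
    (∫ ω, Real.exp (l / α * (ε ω + Real.log (Z ω))) ∂μ = Real.Gamma (1 - 1 / α)) ∧
    variance (fun ω => Real.exp (l / α * (ε ω + Real.log (Z ω)))) μ
      = Real.Gamma (1 - 2 / α) - Real.Gamma (1 - 1 / α) ^ 2 := by
  have hα0 : (0:ℝ) < α := by linarith
  set s : ℝ := l / α with hs
  have hs0 : 0 < s := div_pos hl.1 hα0
  have hs1 : s < 1 := by
    rw [hs, div_lt_one hα0]; linarith [hl.2]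
  have h2s0 : 0 < 2 * s := by linarith
  have h2s1 : 2 * s < 1 := by
    rw [hs]
    rw [show 2 * (l / α) = 2 * l / α by ring, div_lt_one hα0]
    nlinarith [hl.2, hl.1]
  have hsl : s < l := by
    rw [hs, div_lt_iff₀ hα0]
    nlinarith [hl.1]
  have h2sl : 2 * s < l := by
    rw [hs, show 2 * (l / α) = l * (2 / α) by ring]
    nlinarith [hl.1, div_lt_one hα0 |>.mpr (by linarith : (2:ℝ) < α), div_pos (by norm_num : (0:ℝ) < 2) hα0]
  have hsll : s / l = 1 / α := by
    rw [hs, show l / α / l = 1 / α * (l / l) by ring, div_self hl.1.ne', mul_one]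
  have h2sll : 2 * s / l = 2 / α := by
    rw [hs, show 2 * (l / α) / l = 2 / α * (l / l) by ring, div_self hl.1.ne', mul_one]
  have hpos := stable_pos μ hZ hl.1
  have hG := gumbel_moment μ hε hs0 hs1
  have hG2 := gumbel_moment μ hε h2s0 h2s1
  have hZs := stable_moment μ hZ hl.1 hl.2.le hs0 hsl
  have hZ2s := stable_moment μ hZ hl.1 hl.2.le h2s0 h2sl
  have hΓs : 0 < Real.Gamma (1 - s) := Real.Gamma_pos_of_pos (by linarith)
  have hΓ2s : 0 < Real.Gamma (1 - 2 * s) := Real.Gamma_pos_of_pos (by linarith)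
  -- independence of the transformed variables
  have hmexp : ∀ c : ℝ, Measurable (fun y : ℝ => Real.exp (c * y)) := fun c => by fun_prop
  have hmrpow : ∀ c : ℝ, Measurable (fun z : ℝ => z ^ c) := fun c => by fun_prop
  have hind1 : IndepFun (fun ω => Real.exp (s * ε ω)) (fun ω => Z ω ^ s) μ :=
    hind.comp (hmexp s) (hmrpow s)
  have hind2 : IndepFun (fun ω => Real.exp (2 * s * ε ω)) (fun ω => Z ω ^ (2 * s)) μ :=
    hind.comp (hmexp (2 * s)) (hmrpow (2 * s))
  -- first moment
  have hae1 := ae_delta_eq hpos ε s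
  have hint1 : Integrable (fun ω => Real.exp (s * ε ω) * Z ω ^ s) μ :=
    hind1.integrable_mul hG.1 hZs.1
  have hI1 : Integrable (fun ω => Real.exp (s * (ε ω + Real.log (Z ω)))) μ :=
    hint1.congr hae1.symm
  have hE1 : ∫ ω, Real.exp (s * (ε ω + Real.log (Z ω))) ∂μ = Real.Gamma (1 - 1 / α) := by
    have hmul := hind1.integral_mul_eq_mul_integral hG.1.aestronglyMeasurable hZs.1.aestronglyMeasurable
    have heq : ((fun ω => Real.exp (s * ε ω)) * fun ω => Z ω ^ s)
        = fun ω => Real.exp (s * ε ω) * Z ω ^ s := rfl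
    rw [heq] at hmul
    rw [integral_congr_ae hae1, hmul, hG.2, hZs.2, hsll]
    field_simp
  -- second moment
  have hae2 : (fun ω => Real.exp (s * (ε ω + Real.log (Z ω))) ^ 2)
      =ᵐ[μ] fun ω => Real.exp (2 * s * ε ω) * Z ω ^ (2 * s) := by
    filter_upwards [hpos] with ω hω
    rw [sq, ← Real.exp_add, Real.rpow_def_of_pos hω, ← Real.exp_add]
    congr 1
    ring
  have hint2 : Integrable (fun ω => Real.exp (2 * s * ε ω) * Z ω ^ (2 * s)) μ :=
    hind2.integrable_mul hG2.1 hZ2s.1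
  have hI2 : Integrable (fun ω => Real.exp (s * (ε ω + Real.log (Z ω))) ^ 2) μ :=
    hint2.congr hae2.symm
  have hE2 : ∫ ω, Real.exp (s * (ε ω + Real.log (Z ω))) ^ 2 ∂μ = Real.Gamma (1 - 2 / α) := by
    have hmul := hind2.integral_mul_eq_mul_integral hG2.1.aestronglyMeasurable hZ2s.1.aestronglyMeasurable
    have heq : ((fun ω => Real.exp (2 * s * ε ω)) * fun ω => Z ω ^ (2 * s))
        = fun ω => Real.exp (2 * s * ε ω) * Z ω ^ (2 * s) := rfl
    rw [heq] at hmul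
    rw [integral_congr_ae hae2, hmul, hG2.2, hZ2s.2, h2sll]
    field_simp
  -- MemLp
  have hdm : AEStronglyMeasurable (fun ω => Real.exp (s * (ε ω + Real.log (Z ω)))) μ := by
    exact (Real.measurable_exp.comp (measurable_const.mul
      (hε.1.add (Real.measurable_log.comp hZ.1)))).aestronglyMeasurable
  have hmem : MemLp (fun ω => Real.exp (s * (ε ω + Real.log (Z ω)))) 2 μ :=
    (memLp_two_iff_integrable_sq hdm).2 hI2
  refine ⟨hmem, hE1, ?_⟩
  rw [variance_eq_sub hmem]
  have : μ[(fun ω => Real.exp (s * (ε ω + Real.log (Z ω)))) ^ 2]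
      = ∫ ω, Real.exp (s * (ε ω + Real.log (Z ω))) ^ 2 ∂μ := by
    simp [Pi.pow_apply]
  rw [this, hE2, hE1]

/-- Correlation of two Fréchet random variables with shape parameter `α` coupled by a Gumbel
copula of parameter `1/l`: with `δᵢ = exp ((l/α)(εᵢ + log Z))`, the correlation coefficient is
`(Γ(1-2/α) Γ(1-l/α)²/Γ(1-2l/α) - Γ(1-1/α)²) / (Γ(1-2/α) - Γ(1-1/α)²)`. -/
theorem stmt_18 {Ω : Type*} [MeasurableSpace Ω] (μ : Measure Ω) [IsProbabilityMeasure μ]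
    (α l : ℝ) (hα : 2 < α) (hl : l ∈ Set.Ioo (0 : ℝ) 1)
    (ε₁ ε₂ Z : Ω → ℝ)
    (hε₁ : IsStdGumbel μ ε₁) (hε₂ : IsStdGumbel μ ε₂) (hZ : IsPosStable μ Z l)
    (hindep : iIndepFun ![ε₁, ε₂, Z] μ) :
    MemLp (fun ω => Real.exp (l / α * (ε₁ ω + Real.log (Z ω)))) 2 μ ∧
    MemLp (fun ω => Real.exp (l / α * (ε₂ ω + Real.log (Z ω)))) 2 μ ∧
    (∫ ω, Real.exp (l / α * (ε₁ ω + Real.log (Z ω)))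
          * Real.exp (l / α * (ε₂ ω + Real.log (Z ω))) ∂μ
        - (∫ ω, Real.exp (l / α * (ε₁ ω + Real.log (Z ω))) ∂μ)
          * ∫ ω, Real.exp (l / α * (ε₂ ω + Real.log (Z ω))) ∂μ)
      / Real.sqrt (variance (fun ω => Real.exp (l / α * (ε₁ ω + Real.log (Z ω)))) μ
          * variance (fun ω => Real.exp (l / α * (ε₂ ω + Real.log (Z ω)))) μ)
      = (Real.Gamma (1 - 2 / α) * Real.Gamma (1 - l / α) ^ 2 / Real.Gamma (1 - 2 * l / α)
            - Real.Gamma (1 - 1 / α) ^ 2)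
        / (Real.Gamma (1 - 2 / α) - Real.Gamma (1 - 1 / α) ^ 2) := by
  have hα0 : (0:ℝ) < α := by linarith
  have hmeasall : ∀ i, Measurable (![ε₁, ε₂, Z] i) := by
    intro i
    fin_cases i <;> simp [hε₁.1, hε₂.1, hZ.1]
  -- independences
  have hI0Z : IndepFun ε₁ Z μ := by
    have := hindep.indepFun (show (0:Fin 3) ≠ 2 by decide)
    simpa using this
  have hI1Z : IndepFun ε₂ Z μ := by
    have := hindep.indepFun (show (1:Fin 3) ≠ 2 by decide)
    simpa using this
  have hIpZ : IndepFun (fun ω => (ε₁ ω, ε₂ ω)) Z μ := by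
    have := hindep.indepFun_prodMk hmeasall 0 1 2 (by decide) (by decide)
    simpa using this
  have hI01 : IndepFun ε₁ ε₂ μ := by
    have := hindep.indepFun (show (0:Fin 3) ≠ 1 by decide)
    simpa using this
  obtain ⟨hM1, hE1, hV1⟩ := delta_facts μ hα hl hε₁ hZ hI0Z
  obtain ⟨hM2, hE2, hV2⟩ := delta_facts μ hα hl hε₂ hZ hI1Z
  refine ⟨hM1, hM2, ?_⟩
  -- parameters
  set s : ℝ := l / α with hs
  have hs0 : 0 < s := div_pos hl.1 hα0
  have hs1 : s < 1 := by rw [hs, div_lt_one hα0]; linarith [hl.2]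
  have h2s0 : 0 < 2 * s := by linarith
  have h2s1 : 2 * s < 1 := by
    rw [hs, show 2 * (l / α) = 2 * l / α by ring, div_lt_one hα0]
    nlinarith [hl.2, hl.1]
  have h2sl : 2 * s < l := by
    rw [hs, show 2 * (l / α) = l * (2 / α) by ring]
    nlinarith [hl.1, div_lt_one hα0 |>.mpr (by linarith : (2:ℝ) < α),
      div_pos (by norm_num : (0:ℝ) < 2) hα0]
  have h2sll : 2 * s / l = 2 / α := by
    rw [hs, show 2 * (l / α) / l = 2 / α * (l / l) by ring, div_self hl.1.ne', mul_one]
  have hΓ2s : 0 < Real.Gamma (1 - 2 * s) := Real.Gamma_pos_of_pos (by linarith)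
  have hpos := stable_pos μ hZ hl.1
  have hG1 := gumbel_moment μ hε₁ hs0 hs1
  have hG2 := gumbel_moment μ hε₂ hs0 hs1
  have hZ2s := stable_moment μ hZ hl.1 hl.2.le h2s0 h2sl
  -- the cross moment
  have hmexp : Measurable (fun y : ℝ => Real.exp (s * y)) := by fun_prop
  have hmrpow : Measurable (fun z : ℝ => z ^ (2 * s)) := by fun_prop
  have hmφ : Measurable (fun q : ℝ × ℝ => Real.exp (s * q.1) * Real.exp (s * q.2)) := by
    fun_prop
  have hind01 : IndepFun (fun ω => Real.exp (s * ε₁ ω)) (fun ω => Real.exp (s * ε₂ ω)) μ :=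
    hI01.comp hmexp hmexp
  have hGGint : Integrable (fun ω => Real.exp (s * ε₁ ω) * Real.exp (s * ε₂ ω)) μ :=
    hind01.integrable_mul hG1.1 hG2.1
  have hGGval : ∫ ω, Real.exp (s * ε₁ ω) * Real.exp (s * ε₂ ω) ∂μ
      = Real.Gamma (1 - s) * Real.Gamma (1 - s) := by
    have hmul := hind01.integral_mul_eq_mul_integral hG1.1.aestronglyMeasurable hG2.1.aestronglyMeasurable
    have heq : ((fun ω => Real.exp (s * ε₁ ω)) * fun ω => Real.exp (s * ε₂ ω))
        = fun ω => Real.exp (s * ε₁ ω) * Real.exp (s * ε₂ ω) := rfl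
    rw [heq] at hmul
    rw [hmul, hG1.2, hG2.2]
  have hbig : IndepFun (fun ω => Real.exp (s * ε₁ ω) * Real.exp (s * ε₂ ω))
      (fun ω => Z ω ^ (2 * s)) μ := hIpZ.comp hmφ hmrpow
  have haeprod : (fun ω => Real.exp (s * (ε₁ ω + Real.log (Z ω)))
        * Real.exp (s * (ε₂ ω + Real.log (Z ω))))
      =ᵐ[μ] fun ω => (Real.exp (s * ε₁ ω) * Real.exp (s * ε₂ ω)) * Z ω ^ (2 * s) := by
    filter_upwards [hpos] with ω hω
    rw [Real.rpow_def_of_pos hω]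
    simp only [← Real.exp_add]
    congr 1
    ring
  have hE12 : ∫ ω, Real.exp (s * (ε₁ ω + Real.log (Z ω)))
        * Real.exp (s * (ε₂ ω + Real.log (Z ω))) ∂μ
      = Real.Gamma (1 - s) * Real.Gamma (1 - s)
        * (Real.Gamma (1 - 2 / α) / Real.Gamma (1 - 2 * s)) := by
    have hmul := hbig.integral_mul_eq_mul_integral hGGint.aestronglyMeasurable hZ2s.1.aestronglyMeasurable
    have heq : ((fun ω => Real.exp (s * ε₁ ω) * Real.exp (s * ε₂ ω))
        * fun ω => Z ω ^ (2 * s))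
        = fun ω => (Real.exp (s * ε₁ ω) * Real.exp (s * ε₂ ω)) * Z ω ^ (2 * s) := rfl
    rw [heq] at hmul
    rw [integral_congr_ae haeprod, hmul, hGGval, hZ2s.2, h2sll]
  -- conclusion
  have hVnn : 0 ≤ Real.Gamma (1 - 2 / α) - Real.Gamma (1 - 1 / α) ^ 2 := by
    rw [← hV1]
    exact variance_nonneg _ μ
  rw [hE12, hE1, hE2, hV1, hV2, Real.sqrt_mul_self hVnn]
  rw [show (1 - 2 * s : ℝ) = 1 - 2 * l / α by rw [hs]; ring]
  congr 1
  rw [hs]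
  ring
end
end
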